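/- arXiv:2501.13113 — 8 statements merged into one kernel-verified Lean document; each statement's English description precedes it below -/
import Mathlib

section
/- Let μ > 0, m₂ > 0, λ > 0 be real constants and let q be a real exponent with −2 < q < 2. Let u : (0,∞) → ℝ be a nontrivial C² solution of the ODE −t⁻¹(t u'(t))' + μ² t⁻² u(t) + m₂² t² u(t) = λ t^q u(t) on (0,∞) such that ‖u‖₂ < ∞, u extends continuously to [0,∞) with u(0) = 0, and t u'(t) u(t) → 0 as t → 0⁺. Then for every ε with 0 < ε < μ² there exist t₀ ∈ (0,1) and a constant c₁ > 0 such that u(t) ≠ 0 for all t ∈ (0,t₀] and |u(t)| ≤ c₁ t^{μ_ε} for all t ∈ (0,t₀], where μ_ε = √(μ² − ε). -/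
/-!
Near the origin the equation reads `u'' + u'/t = W u` with `t² W(t) → μ²`, so `t² W ≥ κ²`,
`κ = √(μ² - ε)`, on some `(0, t₀]`. There the modified flux `E = t u' u - κ u²` has derivative
`((t u' - κ u)² + (t² W - κ²) u²) / t ≥ 0` and tends to `0` at `0⁺`, so `E ≥ 0`; hence
`(t^(-κ) u)²`, whose derivative is `2 t^(-κ) t^(-κ-1) E`, is nondecreasing on `(0, t₀]`. This is
the bound, and a zero of `u` in `(0, t₀]` would make `u` vanish on a whole interval, hence
everywhere by uniqueness for the linear ODE.
-/

open MeasureTheory Filter Set Topology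
open Real

theorem lipschitzWith_companion {α β : ℝ} {K : NNReal} (hK₁ : 1 ≤ (K : ℝ))
    (hK : |α| + |β| ≤ K) :
    LipschitzWith K (fun p : ℝ × ℝ => (p.2, α * p.1 + β * p.2)) := by
  refine LipschitzWith.of_dist_le_mul fun p r => ?_
  simp only [Prod.dist_eq, Real.dist_eq]
  set d := max |p.1 - r.1| |p.2 - r.2|
  have hd₁ : |p.1 - r.1| ≤ d := le_max_left _ _
  have hd₂ : |p.2 - r.2| ≤ d := le_max_right _ _
  have hd : 0 ≤ d := (abs_nonneg _).trans hd₁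
  refine max_le (hd₂.trans (le_mul_of_one_le_left hd hK₁)) ?_
  calc |α * p.1 + β * p.2 - (α * r.1 + β * r.2)|
      = |α * (p.1 - r.1) + β * (p.2 - r.2)| := by ring_nf
    _ ≤ |α| * |p.1 - r.1| + |β| * |p.2 - r.2| := by
        rw [← abs_mul, ← abs_mul]; exact abs_add_le _ _
    _ ≤ (|α| + |β|) * d := by
        rw [add_mul]; gcongr
    _ ≤ K * d := by gcongr

theorem eqOn_zero_of_linear_ode {A B u u' : ℝ → ℝ} {a b : ℝ}
    (hA : ContinuousOn A (Icc a b)) (hB : ContinuousOn B (Icc a b))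
    (hu : ∀ s ∈ Icc a b, HasDerivAt u (u' s) s)
    (hu' : ∀ s ∈ Icc a b, HasDerivAt u' (A s * u s + B s * u' s) s)
    (ha : u a = 0) (ha' : u' a = 0) : EqOn u 0 (Icc a b) := by
  obtain ⟨C, hC⟩ := isCompact_Icc.exists_bound_of_continuousOn (hA.abs.add hB.abs)
  set K := (max C 1).toNNReal
  have hK : (K : ℝ) = max C 1 := Real.coe_toNNReal _ (zero_le_one.trans (le_max_right _ _))
  have hv : ∀ s ∈ Ico a b, LipschitzOnWith K
      (fun p : ℝ × ℝ => (p.2, A s * p.1 + B s * p.2)) univ := fun s hs =>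
    (lipschitzWith_companion (hK ▸ le_max_right _ _)
      (((le_abs_self _).trans (hC s (Ico_subset_Icc_self hs))).trans
        (hK ▸ le_max_left _ _))).lipschitzOnWith
  have hsol : ∀ s ∈ Icc a b, HasDerivAt (fun s => (u s, u' s)) (u' s, A s * u s + B s * u' s) s :=
    fun s hs => (hu s hs).prodMk (hu' s hs)
  have heq := ODE_solution_unique_of_mem_Icc_right hv
    (HasDerivAt.continuousOn hsol) (fun s hs => (hsol s (Ico_subset_Icc_self hs)).hasDerivWithinAt)
    (fun _ _ => mem_univ _) (g := 0) continuousOn_const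
    (fun s _ => (hasDerivAt_const s (0 : ℝ × ℝ)).hasDerivWithinAt.congr_deriv (by ext <;> simp))
    (fun _ _ => mem_univ _) (by simp [ha, ha'])
  exact fun s hs => congrArg Prod.fst (heq hs)

theorem monotoneOn_Ioc_of_hasDerivAt_nonneg {f f' : ℝ → ℝ} {a b : ℝ}
    (hf : ∀ x ∈ Ioc a b, HasDerivAt f (f' x) x) (hf' : ∀ x ∈ Ioc a b, 0 ≤ f' x) :
    MonotoneOn f (Ioc a b) :=
  monotoneOn_of_hasDerivWithinAt_nonneg (convex_Ioc a b)
    (fun x hx => (hf x hx).continuousAt.continuousWithinAt)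
    (fun x hx => (hf x (interior_subset (s := Ioc a b) hx)).hasDerivWithinAt)
    (fun x hx => hf' x (interior_subset (s := Ioc a b) hx))

theorem MonotoneOn.le_of_tendsto_nhdsGT {f : ℝ → ℝ} {a b c t : ℝ}
    (hf : MonotoneOn f (Ioc a b)) (hlim : Tendsto f (𝓝[>] a) (𝓝 c)) (ht : t ∈ Ioc a b) :
    c ≤ f t := by
  refine le_of_tendsto hlim ?_
  filter_upwards [Ioo_mem_nhdsGT ht.1] with s hs
  exact hf ⟨hs.1, hs.2.le.trans ht.2⟩ ht hs.2.le

theorem exists_forall_Ioc_of_eventually_nhdsGT {p : ℝ → Prop} {a b : ℝ} (hab : a < b)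
    (h : ∀ᶠ s in 𝓝[>] a, p s) : ∃ t₀ ∈ Ioo a b, ∀ s ∈ Ioc a t₀, p s := by
  obtain ⟨c, hc, hsub⟩ := mem_nhdsGT_iff_exists_Ioo_subset.1 (h.and (Ioo_mem_nhdsGT hab))
  have hmid : (a + c) / 2 ∈ Ioo a c := ⟨by linarith [mem_Ioi.1 hc], by linarith [mem_Ioi.1 hc]⟩
  exact ⟨(a + c) / 2, (hsub hmid).2, fun s hs => (hsub ⟨hs.1, hs.2.trans_lt hmid.2⟩).1⟩

theorem abs_le_mul_rpow_of_sq_rpow_neg_mul_le {κ s t x y : ℝ} (hs : 0 < s) (ht : 0 < t)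
    (h : (s ^ (-κ) * x) ^ 2 ≤ (t ^ (-κ) * y) ^ 2) : |x| ≤ |y| * t ^ (-κ) * s ^ κ := by
  have habs := sq_le_sq.1 h
  rw [abs_mul, abs_mul, abs_of_pos (rpow_pos_of_pos hs _), abs_of_pos (rpow_pos_of_pos ht _),
    rpow_neg hs.le, inv_mul_le_iff₀ (rpow_pos_of_pos hs _)] at habs
  linarith

section RadialEquation

variable {u u' V : ℝ → ℝ} {κ s : ℝ}

theorem hasDerivAt_flux_sub_sq (hu : HasDerivAt u (u' s) s)
    (hu' : HasDerivAt u' (V s * u s - s⁻¹ * u' s) s) (hs : s ≠ 0) :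
    HasDerivAt (fun s => s * u' s * u s - κ * u s ^ 2)
      (((s * u' s - κ * u s) ^ 2 + (s ^ 2 * V s - κ ^ 2) * u s ^ 2) / s) s := by
  refine ((((hasDerivAt_id s).mul hu').mul hu).sub ((hu.pow 2).const_mul κ)).congr_deriv ?_
  simp only [Pi.mul_apply, id]
  field_simp
  ring

theorem hasDerivAt_sq_rpow_neg_mul (hu : HasDerivAt u (u' s) s) (hs : 0 < s) :
    HasDerivAt (fun s => (s ^ (-κ) * u s) ^ 2)
      (2 * s ^ (-κ) * s ^ (-κ - 1) * (s * u' s * u s - κ * u s ^ 2)) s := by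
  refine (((hasDerivAt_rpow_const (p := -κ) (Or.inl hs.ne')).mul hu).pow 2).congr_deriv ?_
  simp only [Pi.mul_apply, rpow_sub_one hs.ne']
  field_simp
  ring

theorem monotoneOn_sq_rpow_neg_mul {t₀ : ℝ}
    (hu : ∀ s ∈ Ioc 0 t₀, HasDerivAt u (u' s) s)
    (hu' : ∀ s ∈ Ioc 0 t₀, HasDerivAt u' (V s * u s - s⁻¹ * u' s) s)
    (hV : ∀ s ∈ Ioc 0 t₀, κ ^ 2 ≤ s ^ 2 * V s)
    (hflux : Tendsto (fun s => s * u' s * u s) (𝓝[>] 0) (𝓝 0))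
    (hu₀ : Tendsto u (𝓝[>] 0) (𝓝 0)) :
    MonotoneOn (fun s => (s ^ (-κ) * u s) ^ 2) (Ioc 0 t₀) := by
  have hE : MonotoneOn (fun s => s * u' s * u s - κ * u s ^ 2) (Ioc 0 t₀) :=
    monotoneOn_Ioc_of_hasDerivAt_nonneg
      (fun s hs => hasDerivAt_flux_sub_sq (hu s hs) (hu' s hs) hs.1.ne')
      (fun s hs => div_nonneg (add_nonneg (sq_nonneg _)
        (mul_nonneg (sub_nonneg.2 (hV s hs)) (sq_nonneg _))) hs.1.le)
  have hElim : Tendsto (fun s => s * u' s * u s - κ * u s ^ 2) (𝓝[>] 0) (𝓝 0) := by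
    simpa using hflux.sub ((hu₀.pow 2).const_mul κ)
  refine monotoneOn_Ioc_of_hasDerivAt_nonneg
    (fun s hs => hasDerivAt_sq_rpow_neg_mul (hu s hs) hs.1) (fun s hs => ?_)
  have hs₀ : 0 < s := hs.1
  have hE₀ := hE.le_of_tendsto_nhdsGT hElim hs
  positivity

theorem eq_zero_of_eventuallyEq_zero {a b : ℝ}
    (hu : ∀ s ∈ Ioi 0, HasDerivAt u (u' s) s)
    (hu' : ∀ s ∈ Ioi 0, HasDerivAt u' (V s * u s - s⁻¹ * u' s) s)
    (hV : ContinuousOn V (Ioi 0)) (ha : 0 < a) (hab : a ≤ b) (hzero : u =ᶠ[𝓝 a] 0) :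
    u b = 0 := by
  have hpos : Icc a b ⊆ Ioi 0 := fun s hs => ha.trans_le hs.1
  have hu'a : u' a = 0 := (hu a ha).unique ((hasDerivAt_const a 0).congr_of_eventuallyEq hzero)
  refine eqOn_zero_of_linear_ode (A := V) (B := fun s => -s⁻¹) (hV.mono hpos)
    (continuousOn_inv₀.mono fun s hs => (hpos hs).ne').neg (fun s hs => hu s (hpos hs))
    (fun s hs => (hu' s (hpos hs)).congr_deriv (by ring)) hzero.eq_of_nhds hu'a ⟨hab, le_rfl⟩

theorem ne_zero_of_monotoneOn_sq_rpow_neg_mul {t₀ : ℝ}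
    (hu : ∀ s ∈ Ioi 0, HasDerivAt u (u' s) s)
    (hu' : ∀ s ∈ Ioi 0, HasDerivAt u' (V s * u s - s⁻¹ * u' s) s)
    (hV : ContinuousOn V (Ioi 0))
    (hmono : MonotoneOn (fun s => (s ^ (-κ) * u s) ^ 2) (Ioc 0 t₀))
    (hnontriv : ∃ t ∈ Ioi 0, u t ≠ 0) : ∀ t ∈ Ioc 0 t₀, u t ≠ 0 := by
  intro t₁ ht₁ hzero
  have hvanish : ∀ s ∈ Ioc 0 t₁, u s = 0 := fun s hs => by
    have hle : (s ^ (-κ) * u s) ^ 2 ≤ 0 := by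
      simpa [hzero] using hmono ⟨hs.1, hs.2.trans ht₁.2⟩ ht₁ hs.2
    exact (mul_eq_zero.1 ((sq_nonpos_iff _).1 hle)).resolve_left (rpow_pos_of_pos hs.1 _).ne'
  obtain ⟨b, hb, hub⟩ := hnontriv
  rcases le_or_gt b t₁ with hbt | htb
  · exact hub (hvanish b ⟨hb, hbt⟩)
  have ht₁pos : 0 < t₁ := ht₁.1
  refine hub (eq_zero_of_eventuallyEq_zero hu hu' hV (a := t₁ / 2) (by positivity)
    (by linarith) ?_)
  filter_upwards [Ioo_mem_nhds (by positivity : 0 < t₁ / 2) (by linarith : t₁ / 2 < t₁)]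
    with s hs
  exact hvanish s ⟨hs.1, hs.2.le⟩

end RadialEquation

noncomputable def temporalPotential (μ m₂ lam q s : ℝ) : ℝ :=
  μ ^ 2 / s ^ 2 + m₂ ^ 2 * s ^ 2 - lam * s ^ q

section TemporalPotential

variable {μ m₂ lam q : ℝ}

theorem continuousOn_temporalPotential :
    ContinuousOn (temporalPotential μ m₂ lam q) (Ioi 0) := by
  have hne : ∀ s ∈ Ioi (0 : ℝ), s ≠ 0 := fun s hs => ne_of_gt hs
  unfold temporalPotential
  exact ((continuousOn_const.div (by fun_prop) fun s hs => pow_ne_zero 2 (hne s hs)).add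
    (by fun_prop)).sub (continuousOn_const.mul (continuousOn_id.rpow_const fun s hs =>
      Or.inl (hne s hs)))

theorem sq_mul_temporalPotential {s : ℝ} (hs : 0 < s) :
    s ^ 2 * temporalPotential μ m₂ lam q s = μ ^ 2 + m₂ ^ 2 * s ^ 4 - lam * s ^ (2 + q) := by
  rw [temporalPotential, rpow_add hs, rpow_two]
  field_simp

theorem tendsto_sq_mul_temporalPotential (hq : -2 < q) :
    Tendsto (fun s => s ^ 2 * temporalPotential μ m₂ lam q s) (𝓝[>] 0) (𝓝 (μ ^ 2)) := by
  have hcont : ContinuousAt (fun s : ℝ => μ ^ 2 + m₂ ^ 2 * s ^ 4 - lam * s ^ (2 + q)) 0 :=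
    (continuousAt_const.add (continuousAt_const.mul (continuousAt_id.pow 4))).sub
      (continuousAt_const.mul (continuousAt_rpow_const 0 (2 + q) (Or.inr (by linarith))))
  have hlim : Tendsto (fun s : ℝ => μ ^ 2 + m₂ ^ 2 * s ^ 4 - lam * s ^ (2 + q)) (𝓝[>] 0)
      (𝓝 (μ ^ 2)) := by
    simpa [zero_rpow (by linarith : 2 + q ≠ 0)] using hcont.tendsto.mono_left nhdsWithin_le_nhds
  exact hlim.congr' (eventually_nhdsWithin_of_forall fun s hs => (sq_mul_temporalPotential hs).symm)

theorem hasDerivAt_deriv_of_temporal_ode {u : ℝ → ℝ} (hC2 : ContDiffOn ℝ 2 u (Ioi 0))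
    (hODE : ∀ t ∈ Ioi (0:ℝ),
      -(t⁻¹ * deriv (fun s => s * deriv u s) t) + μ^2 / t^2 * u t + m₂^2 * t^2 * u t
        = lam * t ^ q * u t)
    {t : ℝ} (ht : t ∈ Ioi 0) :
    HasDerivAt (deriv u) (temporalPotential μ m₂ lam q t * u t - t⁻¹ * deriv u t) t := by
  have hu'' : HasDerivAt (deriv u) (deriv (deriv u) t) t :=
    (((hC2.deriv_of_isOpen isOpen_Ioi (m := 1) (by norm_num)).differentiableOn
      (by norm_num)).differentiableAt (Ioi_mem_nhds ht)).hasDerivAt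
  have hflux : HasDerivAt (fun s => s * deriv u s) (1 * deriv u t + t * deriv (deriv u) t) t :=
    (hasDerivAt_id' t).mul hu''
  refine hu''.congr_deriv ?_
  have h := hODE t ht
  rw [hflux.deriv] at h
  have ht0 : t ≠ 0 := ne_of_gt ht
  rw [temporalPotential]
  field_simp at h ⊢
  linarith

end TemporalPotential

theorem temporal_eigenfunction_asymptotics_at_origin_general
    (μ m₂ lam q : ℝ)
    (hq₁ : -2 < q) (u : ℝ → ℝ)
    (hC2 : ContDiffOn ℝ 2 u (Ioi 0))
    (hODE : ∀ t ∈ Ioi (0:ℝ),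
      -(t⁻¹ * deriv (fun s => s * deriv u s) t) + μ^2 / t^2 * u t + m₂^2 * t^2 * u t
        = lam * t ^ q * u t)
    (hnontriv : ∃ t ∈ Ioi (0:ℝ), u t ≠ 0)
    (hcont : ContinuousOn u (Ici 0)) (hu0 : u 0 = 0)
    (hflux : Tendsto (fun t => t * deriv u t * u t) (𝓝[>] 0) (𝓝 0)) :
    ∀ ε : ℝ, 0 < ε → ε < μ^2 →
      ∃ t₀ ∈ Ioo (0:ℝ) 1, ∃ c₁ > (0:ℝ),
        (∀ t ∈ Ioc (0:ℝ) t₀, u t ≠ 0) ∧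
        (∀ t ∈ Ioc (0:ℝ) t₀, |u t| ≤ c₁ * t ^ Real.sqrt (μ^2 - ε)) := by
  intro ε hε hεμ
  set κ := √(μ ^ 2 - ε)
  have hκ : κ ^ 2 = μ ^ 2 - ε := sq_sqrt (by linarith)
  obtain ⟨t₀, ht₀, hV⟩ := exists_forall_Ioc_of_eventually_nhdsGT one_pos
    (((tendsto_sq_mul_temporalPotential (μ := μ) (m₂ := m₂) (lam := lam) hq₁).eventually_const_le
      (by linarith : μ ^ 2 - ε < μ ^ 2)))
  have hu : ∀ s ∈ Ioi (0 : ℝ), HasDerivAt u (deriv u s) s := fun s hs =>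
    ((hC2.differentiableOn (by norm_num)).differentiableAt (Ioi_mem_nhds hs)).hasDerivAt
  have hu' := fun s hs => hasDerivAt_deriv_of_temporal_ode hC2 hODE (t := s) hs
  have hu₀ : Tendsto u (𝓝[>] 0) (𝓝 0) := by
    simpa [hu0] using (hcont 0 self_mem_Ici).tendsto.mono_left
      (nhdsWithin_mono 0 Ioi_subset_Ici_self)
  have hmono := monotoneOn_sq_rpow_neg_mul (κ := κ) (fun s hs => hu s hs.1)
    (fun s hs => hu' s hs.1) (fun s hs => hκ ▸ hV s hs) hflux hu₀
  have hne :=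
    ne_zero_of_monotoneOn_sq_rpow_neg_mul hu hu' continuousOn_temporalPotential hmono hnontriv
  have ht₀mem : t₀ ∈ Ioc 0 t₀ := ⟨ht₀.1, le_rfl⟩
  refine ⟨t₀, ht₀, |u t₀| * t₀ ^ (-κ),
    mul_pos (abs_pos.2 (hne t₀ ht₀mem)) (rpow_pos_of_pos ht₀.1 _), hne, fun t ht => ?_⟩
  exact abs_le_mul_rpow_of_sq_rpow_neg_mul_le ht.1 ht₀.1 (hmono ht ht₀mem ht.2)

/-- A nontrivial finite-energy solution of the Bessel-type
temporal eigenfunction equation `-t⁻¹(t u')' + μ² t⁻² u + m₂² t² u = λ t^q u`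
on `(0,∞)` does not vanish near the origin and satisfies the sharp asymptotic
bound `|u(t)| ≤ c₁ t^{μ_ε}`, `μ_ε = √(μ² - ε)`, near the big bang singularity. -/
theorem temporal_eigenfunction_asymptotics_at_origin
    (μ m₂ lam q : ℝ) (hμ : 0 < μ) (hm₂ : 0 < m₂) (hlam : 0 < lam)
    (hq₁ : -2 < q) (hq₂ : q < 2) (u : ℝ → ℝ)
    (hC2 : ContDiffOn ℝ 2 u (Ioi 0))
    (hODE : ∀ t ∈ Ioi (0:ℝ),
      -(t⁻¹ * deriv (fun s => s * deriv u s) t) + μ^2 / t^2 * u t + m₂^2 * t^2 * u t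
        = lam * t ^ q * u t)
    (hnontriv : ∃ t ∈ Ioi (0:ℝ), u t ≠ 0)
    (hnorm : IntegrableOn
      (fun t => t * (deriv u t)^2 + μ^2 * t⁻¹ * (u t)^2 + m₂^2 * t^3 * (u t)^2) (Ioi 0))
    (hcont : ContinuousOn u (Ici 0)) (hu0 : u 0 = 0)
    (hflux : Tendsto (fun t => t * deriv u t * u t) (𝓝[>] 0) (𝓝 0)) :
    ∀ ε : ℝ, 0 < ε → ε < μ^2 →
      ∃ t₀ ∈ Ioo (0:ℝ) 1, ∃ c₁ > (0:ℝ),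
        (∀ t ∈ Ioc (0:ℝ) t₀, u t ≠ 0) ∧
        (∀ t ∈ Ioc (0:ℝ) t₀, |u t| ≤ c₁ * t ^ Real.sqrt (μ^2 - ε)) :=
  temporal_eigenfunction_asymptotics_at_origin_general μ m₂ lam q hq₁ u hC2 hODE hnontriv hcont hu0
    hflux
end

section
/- Let μ > 0, m₂ > 0, λ > 0 be real constants, let q be a real exponent with −2 < q < 2, and let 0 < t₀ < 1. Let u : (0,t₀] → ℝ be a C² solution of −t⁻¹(t u'(t))' + μ² t⁻² u(t) + m₂² t² u(t) = λ t^q u(t) on (0,t₀] that extends continuously to [0,t₀] with u(0) = 0 and u(t₀) = 0, satisfies t u'(t) u(t) → 0 as t → 0⁺, and has ∫₀^{t₀}( t|u'(t)|² + t⁻¹|u(t)|² ) dt < ∞. Then ∫₀^{t₀} μ² t⁻¹ u(t)² dt ≤ λ ∫₀^{t₀} t^{1+q} u(t)² dt. In particular, if λ t₀^{2+q} < μ², then u vanishes identically on [0,t₀]. -/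
/-!
Multiplying the equation by `t u` gives `(t u' u)' = t u'² + m₂² t³ u² + μ² t⁻¹ u² - λ t^{1+q} u²`.
The finite energy makes every term on the right integrable (`t³` and `t^{1+q}` are `O(t⁻¹)` near `0`),
so the flux `t u' u` has a limit `L` at `t₀` equal to the integral of the right-hand side, the flux
vanishing at `0`. Since `u(t₀) = 0`, the limit of `u u' = (u²)'/2` at `t₀` cannot be positive, so `L ≤ 0`;
dropping the nonnegative terms `t u'²` and `m₂² t³ u²` gives the inequality. If `λ t₀^{2+q} < μ²`, the
bound `t^{1+q} ≤ t₀^{2+q} t⁻¹` then forces `∫ t⁻¹ u² = 0`, and the continuous `u` vanishes.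
-/

open MeasureTheory Filter Set Topology

theorem rpow_le_rpow_add_one_mul_inv {t b p : ℝ} (ht : 0 < t) (htb : t ≤ b) (hp : -1 ≤ p) :
    t ^ p ≤ b ^ (p + 1) * t⁻¹ := by
  calc t ^ p = t ^ (p + 1) * t⁻¹ := by
        rw [Real.rpow_add ht, Real.rpow_one, mul_inv_cancel_right₀ ht.ne']
    _ ≤ b ^ (p + 1) * t⁻¹ := by
        gcongr
        linarith

section WeightedIntegrals

variable {f : ℝ → ℝ} {b p : ℝ}

theorem integrableOn_rpow_mul_of_integrableOn_inv_mul
    (hf : IntegrableOn (fun t => t⁻¹ * f t) (Ioo 0 b))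
    (hfm : AEStronglyMeasurable f (volume.restrict (Ioo 0 b)))
    (hf0 : ∀ t ∈ Ioo 0 b, 0 ≤ f t) (hp : -1 ≤ p) :
    IntegrableOn (fun t => t ^ p * f t) (Ioo 0 b) := by
  refine (hf.const_mul (b ^ (p + 1))).mono' ?_ ?_
  · exact (measurable_id.pow_const p).aestronglyMeasurable.mul hfm
  · refine (ae_restrict_iff' measurableSet_Ioo).2 (.of_forall fun t ht => ?_)
    rw [Real.norm_of_nonneg (mul_nonneg (Real.rpow_nonneg ht.1.le p) (hf0 t ht)), ← mul_assoc]
    exact mul_le_mul_of_nonneg_right (rpow_le_rpow_add_one_mul_inv ht.1 ht.2.le hp) (hf0 t ht)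

theorem setIntegral_rpow_mul_le
    (hf : IntegrableOn (fun t => t⁻¹ * f t) (Ioo 0 b))
    (hfm : AEStronglyMeasurable f (volume.restrict (Ioo 0 b)))
    (hf0 : ∀ t ∈ Ioo 0 b, 0 ≤ f t) (hp : -1 ≤ p) :
    ∫ t in Ioo 0 b, t ^ p * f t ≤ b ^ (p + 1) * ∫ t in Ioo 0 b, t⁻¹ * f t := by
  rw [← integral_const_mul]
  refine setIntegral_mono_on (integrableOn_rpow_mul_of_integrableOn_inv_mul hf hfm hf0 hp)
    (hf.const_mul _) measurableSet_Ioo fun t ht => ?_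
  rw [← mul_assoc]
  exact mul_le_mul_of_nonneg_right (rpow_le_rpow_add_one_mul_inv ht.1 ht.2.le hp) (hf0 t ht)

end WeightedIntegrals

theorem tendsto_nhdsLT_add_integral_of_hasDerivAt {E : Type*} [NormedAddCommGroup E]
    [NormedSpace ℝ E] [CompleteSpace E] {F G : ℝ → E} {a b : ℝ} {Fa : E} (hab : a < b)
    (hderiv : ∀ x ∈ Ioo a b, HasDerivAt F (G x) x) (hG : IntegrableOn G (Ioo a b))
    (hFa : Tendsto F (𝓝[>] a) (𝓝 Fa)) :
    Tendsto F (𝓝[<] b) (𝓝 (Fa + ∫ x in Ioo a b, G x)) := by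
  have hprim : ∀ x ∈ Ioo a b, F x = Fa + ∫ y in a..x, G y := fun x hx => by
    rw [intervalIntegral.integral_eq_sub_of_hasDerivAt_of_tendsto hx.1
      (fun y hy => hderiv y ⟨hy.1, hy.2.trans hx.2⟩)
      ((intervalIntegrable_iff_integrableOn_Ioo_of_le hx.1.le).2
        (hG.mono_set (Ioo_subset_Ioo_right hx.2.le)))
      hFa ((hderiv x hx).continuousAt.tendsto.mono_left nhdsWithin_le_nhds)]
    abel
  have hprim_cont : ContinuousWithinAt (fun x => ∫ y in a..x, G y) (Icc a b) b := by
    have hGIcc : IntegrableOn G (uIcc a b) := by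
      rwa [uIcc_of_le hab.le, integrableOn_Icc_iff_integrableOn_Ioo]
    simpa only [uIcc_of_le hab.le] using
      intervalIntegral.continuousOn_primitive_interval hGIcc b (by simp [hab.le])
  have hlim := (hprim_cont.mono Ioo_subset_Icc_self).tendsto.const_add Fa
  rw [nhdsWithin_Ioo_eq_nhdsLT hab, intervalIntegral.integral_of_le hab.le,
    integral_Ioc_eq_integral_Ioo] at hlim
  refine hlim.congr' ?_
  filter_upwards [Ioo_mem_nhdsLT hab] with x hx using (hprim x hx).symm

theorem nonpos_of_tendsto_mul_deriv_nhdsLT {v v' : ℝ → ℝ} {a b ℓ : ℝ} (hab : a < b)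
    (hv : ContinuousOn v (Icc a b)) (hderiv : ∀ x ∈ Ioo a b, HasDerivAt v (v' x) x)
    (hvb : v b = 0) (hℓ : Tendsto (fun x => v x * v' x) (𝓝[<] b) (𝓝 ℓ)) : ℓ ≤ 0 := by
  -- otherwise `v ^ 2` would increase strictly on some `[s, b]`, up to `v b ^ 2 = 0`
  by_contra! hℓ_pos
  obtain ⟨s, hsb, hpos⟩ :=
    mem_nhdsLT_iff_exists_Ioo_subset.1 (hℓ.eventually (lt_mem_nhds hℓ_pos))
  have hmax : max a s < b := max_lt hab hsb
  have hIoo : Ioo (max a s) b ⊆ Ioo a b := Ioo_subset_Ioo_left (le_max_left a s)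
  obtain ⟨c, hc, hslope⟩ := exists_hasDerivAt_eq_slope (fun x => v x ^ 2)
    (fun x => 2 * v x * v' x) hmax
    ((hv.mono (Icc_subset_Icc_left (le_max_left a s))).pow 2)
    (fun x hx => by simpa using (hderiv x (hIoo hx)).fun_pow 2)
  have hvc : 0 < v c * v' c := hpos (Ioo_subset_Ioo_left (le_max_right a s) hc)
  have hslope_neg : (v b ^ 2 - v (max a s) ^ 2) / (b - max a s) ≤ 0 := by
    rw [hvb]
    exact div_nonpos_of_nonpos_of_nonneg (by nlinarith) (by linarith)
  linarith

theorem eqOn_zero_of_setIntegral_inv_mul_sq_nonpos {u : ℝ → ℝ} {b : ℝ} (hb : 0 < b)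
    (hu : ContinuousOn u (Icc 0 b)) (hint : IntegrableOn (fun t => t⁻¹ * u t ^ 2) (Ioo 0 b))
    (hle : ∫ t in Ioo 0 b, t⁻¹ * u t ^ 2 ≤ 0) : EqOn u 0 (Icc 0 b) := by
  have hnonneg : ∀ t ∈ Ioo 0 b, 0 ≤ t⁻¹ * u t ^ 2 := fun t ht =>
    mul_nonneg (inv_nonneg.2 ht.1.le) (sq_nonneg _)
  have hzero : (fun t => t⁻¹ * u t ^ 2) =ᵐ[volume.restrict (Ioo 0 b)] 0 :=
    (setIntegral_eq_zero_iff_of_nonneg_ae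
      ((ae_restrict_iff' measurableSet_Ioo).2 (.of_forall hnonneg)) hint).1
      (le_antisymm hle (setIntegral_nonneg measurableSet_Ioo hnonneg))
  have hae : u =ᵐ[volume.restrict (Icc 0 b)] 0 := by
    rw [← Measure.restrict_congr_set Ioo_ae_eq_Icc]
    filter_upwards [hzero, ae_restrict_mem measurableSet_Ioo] with t ht htmem
    simpa [htmem.1.ne'] using ht
  exact Measure.eqOn_Icc_of_ae_eq volume hb.ne hae hu continuousOn_const

section Bessel

variable {μ m₂ lam q t₀ : ℝ} {u : ℝ → ℝ}

noncomputable def besselEnergyDensity (μ m₂ lam q : ℝ) (u : ℝ → ℝ) (t : ℝ) : ℝ :=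
  t * deriv u t ^ 2 + m₂ ^ 2 * (t ^ (3 : ℝ) * u t ^ 2)
    + (μ ^ 2 * t⁻¹ * u t ^ 2 - lam * (t ^ (1 + q) * u t ^ 2))

theorem hasDerivAt_mul_deriv_mul_of_bessel {t : ℝ} (ht : 0 < t)
    (hu : HasDerivAt u (deriv u t) t) (hu' : DifferentiableAt ℝ (deriv u) t)
    (hODE : -(t⁻¹ * deriv (fun s => s * deriv u s) t) + μ^2 / t^2 * u t + m₂^2 * t^2 * u t
        = lam * t ^ q * u t) :
    HasDerivAt (fun s => s * deriv u s * u s) (besselEnergyDensity μ m₂ lam q u t) t := by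
  have hflux : HasDerivAt (fun s => s * deriv u s) (deriv u t + t * deriv (deriv u) t) t := by
    simpa using (hasDerivAt_id' t).fun_mul hu'.hasDerivAt
  rw [hflux.deriv] at hODE
  refine (hflux.fun_mul hu).congr_deriv ?_
  rw [besselEnergyDensity, Real.rpow_add ht, Real.rpow_one,
    show (3 : ℝ) = (3 : ℕ) by norm_num, Real.rpow_natCast]
  field_simp at hODE ⊢
  linear_combination (-u t) * hODE

theorem setIntegral_besselEnergyDensity_nonpos (ht₀ : 0 < t₀)
    (hC2 : ContDiffOn ℝ 2 u (Ioo 0 t₀))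
    (hODE : ∀ t ∈ Ioo (0:ℝ) t₀,
      -(t⁻¹ * deriv (fun s => s * deriv u s) t) + μ^2 / t^2 * u t + m₂^2 * t^2 * u t
        = lam * t ^ q * u t)
    (hcont : ContinuousOn u (Icc 0 t₀)) (hut₀ : u t₀ = 0)
    (hflux : Tendsto (fun t => t * deriv u t * u t) (𝓝[>] 0) (𝓝 0))
    (hint : IntegrableOn (besselEnergyDensity μ m₂ lam q u) (Ioo 0 t₀)) :
    ∫ t in Ioo 0 t₀, besselEnergyDensity μ m₂ lam q u t ≤ 0 := by
  have hu : ∀ t ∈ Ioo 0 t₀, HasDerivAt u (deriv u t) t := fun t ht =>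
    (hC2.differentiableOn two_ne_zero t ht |>.differentiableAt (isOpen_Ioo.mem_nhds ht)).hasDerivAt
  have hu' : ∀ t ∈ Ioo 0 t₀, DifferentiableAt ℝ (deriv u) t := fun t ht =>
    (hC2.deriv_of_isOpen isOpen_Ioo le_rfl).differentiableOn one_ne_zero t ht
      |>.differentiableAt (isOpen_Ioo.mem_nhds ht)
  have hF := tendsto_nhdsLT_add_integral_of_hasDerivAt ht₀
    (fun t ht => hasDerivAt_mul_deriv_mul_of_bessel ht.1 (hu t ht) (hu' t ht) (hODE t ht))
    hint hflux
  have hnonpos := nonpos_of_tendsto_mul_deriv_nhdsLT ht₀ hcont hu hut₀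
    ((hF.div (tendsto_nhdsWithin_of_tendsto_nhds tendsto_id) ht₀.ne').congr' <| by
      filter_upwards [Ioo_mem_nhdsLT ht₀] with x hx
      rw [Pi.div_apply, id]
      field_simp [hx.1.ne'])
  rwa [zero_add, div_le_iff₀ ht₀, zero_mul] at hnonpos

theorem setIntegral_inv_mul_sq_le_of_bessel (ht₀ : 0 < t₀) (hq : -2 ≤ q)
    (hC2 : ContDiffOn ℝ 2 u (Ioo 0 t₀))
    (hODE : ∀ t ∈ Ioo (0:ℝ) t₀,
      -(t⁻¹ * deriv (fun s => s * deriv u s) t) + μ^2 / t^2 * u t + m₂^2 * t^2 * u t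
        = lam * t ^ q * u t)
    (hcont : ContinuousOn u (Icc 0 t₀)) (hut₀ : u t₀ = 0)
    (hflux : Tendsto (fun t => t * deriv u t * u t) (𝓝[>] 0) (𝓝 0))
    (hkin : IntegrableOn (fun t => t * deriv u t ^ 2) (Ioo 0 t₀))
    (hpot : IntegrableOn (fun t => t⁻¹ * u t ^ 2) (Ioo 0 t₀)) :
    ∫ t in Ioo 0 t₀, μ ^ 2 * t⁻¹ * u t ^ 2 ≤ lam * ∫ t in Ioo 0 t₀, t ^ (1 + q) * u t ^ 2 := by
  have hsq_meas : AEStronglyMeasurable (fun t => u t ^ 2) (volume.restrict (Ioo 0 t₀)) :=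
    ((hcont.mono Ioo_subset_Icc_self).aestronglyMeasurable measurableSet_Ioo).pow 2
  have hsq : ∀ t ∈ Ioo (0:ℝ) t₀, 0 ≤ u t ^ 2 := fun t _ => sq_nonneg _
  have hmass := integrableOn_rpow_mul_of_integrableOn_inv_mul hpot hsq_meas hsq
    (p := 1 + q) (by linarith)
  have hcubic := integrableOn_rpow_mul_of_integrableOn_inv_mul hpot hsq_meas hsq
    (p := 3) (by norm_num)
  have hpot' : IntegrableOn (fun t => μ ^ 2 * t⁻¹ * u t ^ 2) (Ioo 0 t₀) := by
    simpa only [IntegrableOn, mul_assoc] using hpot.const_mul (μ ^ 2)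
  have hdiff : IntegrableOn (fun t => μ ^ 2 * t⁻¹ * u t ^ 2 - lam * (t ^ (1 + q) * u t ^ 2))
      (Ioo 0 t₀) := hpot'.sub (hmass.const_mul lam)
  have hint : IntegrableOn (besselEnergyDensity μ m₂ lam q u) (Ioo 0 t₀) :=
    (hkin.add (hcubic.const_mul _)).add hdiff
  have hle : ∫ t in Ioo 0 t₀, (μ ^ 2 * t⁻¹ * u t ^ 2 - lam * (t ^ (1 + q) * u t ^ 2)) ≤ 0 := by
    refine (setIntegral_mono_on hdiff hint measurableSet_Ioo fun t ht => ?_).trans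
      (setIntegral_besselEnergyDensity_nonpos ht₀ hC2 hODE hcont hut₀ hflux hint)
    refine le_add_of_nonneg_left (add_nonneg (mul_nonneg ht.1.le (sq_nonneg _)) ?_)
    exact mul_nonneg (sq_nonneg _) (mul_nonneg (Real.rpow_nonneg ht.1.le _) (sq_nonneg _))
  rw [integral_sub hpot' (hmass.const_mul lam), integral_const_mul] at hle
  linarith

end Bessel

theorem temporal_eigenfunction_no_small_zero_general
    (μ m₂ lam q t₀ : ℝ) (hlam : 0 < lam)
    (hq₁ : -2 < q) (ht₀ : 0 < t₀) (u : ℝ → ℝ)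
    (hC2 : ContDiffOn ℝ 2 u (Ioo 0 t₀))
    (hODE : ∀ t ∈ Ioo (0:ℝ) t₀,
      -(t⁻¹ * deriv (fun s => s * deriv u s) t) + μ^2 / t^2 * u t + m₂^2 * t^2 * u t
        = lam * t ^ q * u t)
    (hcont : ContinuousOn u (Icc 0 t₀)) (hut₀ : u t₀ = 0)
    (hflux : Tendsto (fun t => t * deriv u t * u t) (𝓝[>] 0) (𝓝 0))
    (hnorm : IntegrableOn (fun t => t * (deriv u t)^2 + t⁻¹ * (u t)^2) (Ioo 0 t₀)) :
    (∫ t in Ioo (0:ℝ) t₀, μ^2 * t⁻¹ * (u t)^2)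
      ≤ lam * ∫ t in Ioo (0:ℝ) t₀, t ^ (1 + q) * (u t)^2 ∧
    (lam * t₀ ^ (2 + q) < μ^2 → ∀ t ∈ Icc (0:ℝ) t₀, u t = 0) := by
  obtain ⟨hkin, hpot⟩ := (integrable_add_iff_of_nonneg
    ((measurable_id.mul ((measurable_deriv u).pow_const 2)).aestronglyMeasurable)
    ((ae_restrict_iff' measurableSet_Ioo).2 (.of_forall fun t ht =>
      mul_nonneg ht.1.le (sq_nonneg _)))
    ((ae_restrict_iff' measurableSet_Ioo).2 (.of_forall fun t ht =>
      mul_nonneg (inv_nonneg.2 ht.1.le) (sq_nonneg _)))).1 hnorm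
  have hmain := setIntegral_inv_mul_sq_le_of_bessel ht₀ hq₁.le hC2 hODE hcont hut₀ hflux hkin hpot
  refine ⟨hmain, fun hsmall t ht => eqOn_zero_of_setIntegral_inv_mul_sq_nonpos ht₀ hcont hpot ?_ ht⟩
  have hbound := setIntegral_rpow_mul_le hpot
    (((hcont.mono Ioo_subset_Icc_self).aestronglyMeasurable measurableSet_Ioo).pow 2)
    (fun t _ => sq_nonneg (u t)) (p := 1 + q) (by linarith)
  rw [show 1 + q + 1 = 2 + q by ring] at hbound
  have hpot_eq : ∫ t in Ioo 0 t₀, μ ^ 2 * t⁻¹ * u t ^ 2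
      = μ ^ 2 * ∫ t in Ioo 0 t₀, t⁻¹ * u t ^ 2 := by
    simp only [mul_assoc, integral_const_mul]
  nlinarith

/-- A finite-energy solution of the Bessel-type equation
`-t⁻¹(t u')' + μ² t⁻² u + m₂² t² u = λ t^q u` on `(0,t₀]` vanishing at both
endpoints satisfies `∫ μ² t⁻¹ u² ≤ λ ∫ t^{1+q} u²`; in particular, if
`λ t₀^{2+q} < μ²` then `u ≡ 0` on `[0,t₀]`. -/
theorem temporal_eigenfunction_no_small_zero
    (μ m₂ lam q t₀ : ℝ) (hμ : 0 < μ) (hm₂ : 0 < m₂) (hlam : 0 < lam)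
    (hq₁ : -2 < q) (hq₂ : q < 2) (ht₀ : 0 < t₀) (ht₀' : t₀ < 1) (u : ℝ → ℝ)
    (hC2 : ContDiffOn ℝ 2 u (Ioo 0 t₀))
    (hODE : ∀ t ∈ Ioo (0:ℝ) t₀,
      -(t⁻¹ * deriv (fun s => s * deriv u s) t) + μ^2 / t^2 * u t + m₂^2 * t^2 * u t
        = lam * t ^ q * u t)
    (hcont : ContinuousOn u (Icc 0 t₀)) (hu0 : u 0 = 0) (hut₀ : u t₀ = 0)
    (hflux : Tendsto (fun t => t * deriv u t * u t) (𝓝[>] 0) (𝓝 0))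
    (hnorm : IntegrableOn (fun t => t * (deriv u t)^2 + t⁻¹ * (u t)^2) (Ioo 0 t₀)) :
    (∫ t in Ioo (0:ℝ) t₀, μ^2 * t⁻¹ * (u t)^2)
      ≤ lam * ∫ t in Ioo (0:ℝ) t₀, t ^ (1 + q) * (u t)^2 ∧
    (lam * t₀ ^ (2 + q) < μ^2 → ∀ t ∈ Icc (0:ℝ) t₀, u t = 0) :=
  temporal_eigenfunction_no_small_zero_general μ m₂ lam q t₀ hlam hq₁ ht₀ u hC2 hODE hcont hut₀
    hflux hnorm
end

section
/- Let m₂ > 0, λ > 0 and μ_ε > 0 be real constants, set a = (μ_ε + 1)/2 − λ/(4 m₂) and b = μ_ε + 1, and define M : ℝ → ℝ by the power series M(z) = Σ_{k=0}^∞ ( (a)_k / ( (b)_k · k! ) ) z^k, where (x)_k = x(x+1)···(x+k−1) denotes the rising factorial (Pochhammer symbol) with (x)_0 = 1. Then this power series converges absolutely for every z ∈ ℝ, and the function ψ(t) = e^{−m₂ t²/2} · t^{μ_ε} · M(m₂ t²) is a C² solution on (0,∞) of the equation −t⁻¹(t ψ'(t))' + μ_ε² t⁻² ψ(t) + m₂²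 t² ψ(t) = λ ψ(t), and ψ(t) → 0 as t → 0⁺. -/
open MeasureTheory Filter Set Topology

/-- The rising factorial (Pochhammer symbol) `(x)_k = x(x+1)⋯(x+k-1)`, `(x)_0 = 1`. -/
def risingFactorial (x : ℝ) (k : ℕ) : ℝ := ∏ i ∈ Finset.range k, (x + i)

/-- The coefficient `(a)_k / ((b)_k · k!)` of Kummer's confluent hypergeometric series. -/
noncomputable def kummerCoef (a b : ℝ) (k : ℕ) : ℝ :=
  risingFactorial a k / (risingFactorial b k * (Nat.factorial k))

/-- Kummer's confluent hypergeometric function `M(a,b,z) = Σ_k (a)_k/((b)_k k!) z^k`. -/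
noncomputable def kummerM (a b z : ℝ) : ℝ := ∑' k : ℕ, kummerCoef a b k * z ^ k

/-! The coefficients `c_k` of `M(a,b,·)` satisfy `(b+k)(k+1) c_{k+1} = (a+k) c_k`, so the
ratio test gives absolute convergence on all of `ℝ`, and termwise differentiation gives
`M'(a,b,z) = (a/b) M(a+1,b+1,z)`. Hence `M` is smooth, and comparing coefficients yields
Kummer's equation `z M'' + (b - z) M' = a M`. For `ψ(t) = e^{-mt²/2} t^μ M(mt²)` a direct
computation shows that `-t⁻¹(tψ')' + μ²t⁻²ψ + m²t²ψ - λψ` is `-4m e^{-mt²/2} t^μ` times the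
defect of Kummer's equation at `z = mt²` with `a = (μ+1)/2 - λ/(4m)`, `b = μ+1`. Near `0` the
factor `t^μ` forces `ψ → 0`. -/

open scoped ContDiff

theorem hasDerivAt_tsum_mul_pow {c : ℕ → ℝ}
    (hc : ∀ r, Summable fun k : ℕ => |(k + 1) * c (k + 1) * r ^ k|) (z : ℝ) :
    HasDerivAt (fun y => ∑' k, c k * y ^ k) (∑' k : ℕ, (k + 1) * c (k + 1) * z ^ k) z := by
  set R := |z| + 1
  have hz : z ∈ Metric.ball (0 : ℝ) R := by simp [R]
  -- On the ball of radius `R` the termwise derivatives are dominated by the derivative series at R.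
  have hbound : Summable fun k : ℕ => |c k| * (k * R ^ (k - 1)) := by
    refine (summable_nat_add_iff 1).1 ((hc R).congr fun k => ?_)
    rw [abs_mul, abs_mul, abs_of_nonneg (by positivity : (0 : ℝ) ≤ k + 1),
      abs_of_nonneg (by positivity : 0 ≤ R ^ k)]
    push_cast
    ring
  have hderiv := hasDerivAt_tsum_of_isPreconnected hbound Metric.isOpen_ball
    (convex_ball (0 : ℝ) R).isPreconnected
    (g := fun k y => c k * y ^ k) (g' := fun k y => c k * (k * y ^ (k - 1)))
    (fun k y _ => (hasDerivAt_pow k y).const_mul (c k))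
    (fun k y hy => ?_) (Metric.mem_ball_self (by positivity))
    (summable_of_ne_finset_zero (s := {0}) fun k hk => by simp_all) hz
  · refine hderiv.congr_deriv ?_
    rw [tsum_eq_zero_add' ((hc z).of_abs.congr fun k => ?_)]
    · simp only [Nat.cast_zero, zero_mul, mul_zero, zero_add]
      exact tsum_congr fun k => by push_cast; ring
    · push_cast
      ring
  · rw [Metric.mem_ball, dist_zero_right, Real.norm_eq_abs] at hy
    rw [Real.norm_eq_abs, abs_mul, abs_mul, abs_pow, Nat.abs_cast]
    gcongr

theorem hasSum_mul_pow_of_hasSum_succ {d : ℕ → ℝ} {z S : ℝ}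
    (h : HasSum (fun k : ℕ => d (k + 1) * z ^ k) S) :
    HasSum (fun k : ℕ => d k * z ^ k) (z * S + d 0) := by
  have hshift : HasSum (fun k : ℕ => d (k + 1) * z ^ (k + 1)) (z * S) :=
    (h.mul_left z).congr_fun fun k => by ring
  have h' := (hasSum_nat_add_iff (f := fun k => d k * z ^ k) 1).1 hshift
  rwa [Finset.sum_range_one, pow_zero, mul_one] at h'

theorem risingFactorial_succ (x : ℝ) (k : ℕ) :
    risingFactorial x (k + 1) = risingFactorial x k * (x + k) :=
  Finset.prod_range_succ _ _

theorem risingFactorial_succ' (x : ℝ) (k : ℕ) :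
    risingFactorial x (k + 1) = x * risingFactorial (x + 1) k := by
  simp only [risingFactorial, Finset.prod_range_succ', Nat.cast_add, Nat.cast_one,
    Nat.cast_zero, add_zero, mul_comm x, add_right_comm x, add_assoc]

-- Holds for all `a b`: when `b + k = 0` both sides vanish since `x / 0 = 0`.
theorem kummerCoef_succ (a b : ℝ) (k : ℕ) :
    kummerCoef a b (k + 1) = kummerCoef a b k * ((a + k) / ((b + k) * (k + 1))) := by
  simp only [kummerCoef, risingFactorial_succ, Nat.factorial_succ, Nat.cast_mul, div_mul_div_comm]
  push_cast
  congr 1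
  ring

theorem kummerCoef_succ_mul (a : ℝ) {b : ℝ} {k : ℕ} (hb : b + k ≠ 0) :
    kummerCoef a b (k + 1) * ((b + k) * (k + 1)) = (a + k) * kummerCoef a b k := by
  rw [kummerCoef_succ, mul_assoc, div_mul_cancel₀ _ (mul_ne_zero hb k.cast_add_one_ne_zero),
    mul_comm]

theorem succ_mul_kummerCoef_succ (a b : ℝ) (k : ℕ) :
    (k + 1) * kummerCoef a b (k + 1) = a / b * kummerCoef (a + 1) (b + 1) k := by
  simp only [kummerCoef, risingFactorial_succ', Nat.factorial_succ, Nat.cast_mul, div_mul_div_comm]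
  push_cast
  rw [mul_div_assoc', mul_comm ((k : ℝ) + 1), show b * risingFactorial (b + 1) k *
    ((k + 1) * k.factorial) = b * (risingFactorial (b + 1) k * k.factorial) * (k + 1) by ring]
  exact mul_div_mul_right _ _ k.cast_add_one_ne_zero

theorem tendsto_kummer_term_ratio (a b z : ℝ) :
    Tendsto (fun k : ℕ => (a + k) / ((b + k) * (k + 1)) * z) atTop (𝓝 0) := by
  have h₁ : Tendsto (fun k : ℕ => (a + k) / (b + k)) atTop (𝓝 1) := by
    simpa using tendsto_add_mul_div_add_mul_atTop_nhds a b 1 one_ne_zero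
  have h₂ := h₁.mul ((tendsto_one_div_add_atTop_nhds_zero_nat (𝕜 := ℝ)).const_mul z)
  rw [mul_zero, mul_zero] at h₂
  refine h₂.congr fun k => ?_
  rw [mul_one_div, div_mul_div_comm, div_mul_eq_mul_div]

theorem summable_abs_kummerCoef_mul_pow (a b z : ℝ) :
    Summable fun k : ℕ => |kummerCoef a b k * z ^ k| := by
  refine summable_of_ratio_norm_eventually_le (r := 1 / 2) (by norm_num) ?_
  have hratio := (tendsto_kummer_term_ratio a b z).abs
  rw [abs_zero] at hratio
  filter_upwards [hratio.eventually_le_const (by norm_num : (0:ℝ) < 1 / 2)] with k hk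
  have hsucc : kummerCoef a b (k + 1) * z ^ (k + 1)
      = (a + k) / ((b + k) * (k + 1)) * z * (kummerCoef a b k * z ^ k) := by
    rw [kummerCoef_succ, pow_succ]; ring
  rw [Real.norm_eq_abs, Real.norm_eq_abs, abs_abs, abs_abs, hsucc, abs_mul]
  exact mul_le_mul_of_nonneg_right hk (abs_nonneg _)

theorem hasSum_kummerM (a b z : ℝ) :
    HasSum (fun k : ℕ => kummerCoef a b k * z ^ k) (kummerM a b z) :=
  (summable_abs_kummerCoef_mul_pow a b z).of_abs.hasSum

theorem hasDerivAt_kummerM (a b z : ℝ) :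
    HasDerivAt (kummerM a b) (a / b * kummerM (a + 1) (b + 1) z) z := by
  have h := hasDerivAt_tsum_mul_pow (c := kummerCoef a b) (fun r => ?_) z
  · simp only [succ_mul_kummerCoef_succ, mul_assoc, tsum_mul_left] at h
    exact h
  · simpa only [succ_mul_kummerCoef_succ, mul_assoc, abs_mul] using
      (summable_abs_kummerCoef_mul_pow (a + 1) (b + 1) r).mul_left |a / b|

theorem deriv_kummerM (a b : ℝ) :
    deriv (kummerM a b) = fun z => a / b * kummerM (a + 1) (b + 1) z :=
  funext fun z => (hasDerivAt_kummerM a b z).deriv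

theorem differentiable_kummerM (a b : ℝ) : Differentiable ℝ (kummerM a b) :=
  fun z => (hasDerivAt_kummerM a b z).differentiableAt

theorem contDiff_kummerM (a b : ℝ) : ContDiff ℝ ∞ (kummerM a b) := by
  refine contDiff_infty.2 fun n => ?_
  induction n generalizing a b with
  | zero => exact contDiff_zero.2 (differentiable_kummerM a b).continuous
  | succ n ih =>
    rw [Nat.cast_succ, contDiff_succ_iff_deriv, deriv_kummerM]
    exact ⟨differentiable_kummerM a b, by simp,
      (ih (a + 1) (b + 1)).const_smul (a / b)⟩

theorem kummerM_ode (a : ℝ) {b : ℝ} (hb : ∀ k : ℕ, b + k ≠ 0) (z : ℝ) :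
    z * deriv (deriv (kummerM a b)) z + (b - z) * deriv (kummerM a b) z = a * kummerM a b z := by
  have hM₁ : HasSum (fun k : ℕ => (k + 1) * kummerCoef a b (k + 1) * z ^ k)
      (deriv (kummerM a b) z) := by
    rw [deriv_kummerM]
    simpa only [succ_mul_kummerCoef_succ, mul_assoc] using
      (hasSum_kummerM (a + 1) (b + 1) z).mul_left (a / b)
  have hM₂ : HasSum (fun k : ℕ => (k + 1) * ((k + 1 + 1) * kummerCoef a b (k + 1 + 1)) * z ^ k)
      (deriv (deriv (kummerM a b)) z) := by
    rw [deriv_kummerM, ((hasDerivAt_kummerM (a + 1) (b + 1) z).const_mul (a / b)).deriv]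
    refine (((hasSum_kummerM (a + 1 + 1) (b + 1 + 1) z).mul_left ((a + 1) / (b + 1))).mul_left
      (a / b)).congr_fun fun k => ?_
    have h₁ := succ_mul_kummerCoef_succ a b (k + 1)
    have h₂ := succ_mul_kummerCoef_succ (a + 1) (b + 1) k
    push_cast at h₁
    linear_combination (z ^ k * (k + 1)) * h₁ + (z ^ k * (a / b)) * h₂
  have hzM₁ := hasSum_mul_pow_of_hasSum_succ (d := fun k => k * kummerCoef a b k)
    (hM₁.congr_fun fun k => by push_cast; ring)
  have hzM₂ := hasSum_mul_pow_of_hasSum_succ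
    (d := fun k => k * ((k + 1) * kummerCoef a b (k + 1))) (hM₂.congr_fun fun k => by
      push_cast; ring)
  have hsum := ((hzM₂.add (hM₁.mul_left b)).sub hzM₁).sub ((hasSum_kummerM a b z).mul_left a)
  have := (hsum.congr_fun fun k => ?_).unique hasSum_zero
  · simp only [Nat.cast_zero, zero_mul, add_zero] at this
    linear_combination this
  · linear_combination -z ^ k * kummerCoef_succ_mul a (hb k)

noncomputable def kummerAnsatz (m μ : ℝ) (M : ℝ → ℝ) (t : ℝ) : ℝ :=
  Real.exp (-(m * t ^ 2) / 2) * t ^ μ * M (m * t ^ 2)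

theorem hasDerivAt_mul_sq (m s : ℝ) : HasDerivAt (fun r => m * r ^ 2) (2 * m * s) s := by
  refine ((hasDerivAt_pow 2 s).const_mul m).congr_deriv ?_
  norm_num
  ring

theorem hasDerivAt_exp_mul_rpow (m μ : ℝ) {s : ℝ} (hs : s ≠ 0) :
    HasDerivAt (fun r => Real.exp (-(m * r ^ 2) / 2) * r ^ μ)
      (Real.exp (-(m * s ^ 2) / 2) * s ^ μ * (μ / s - m * s)) s := by
  have hexp : HasDerivAt (fun r => Real.exp (-(m * r ^ 2) / 2))
      (Real.exp (-(m * s ^ 2) / 2) * (-(2 * m * s) / 2)) s :=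
    ((hasDerivAt_mul_sq m s).neg.div_const 2).exp
  refine (hexp.mul (Real.hasDerivAt_rpow_const (p := μ) (Or.inl hs))).congr_deriv ?_
  rw [Real.rpow_sub_one hs]
  ring

theorem hasDerivAt_comp_mul_sq (m : ℝ) {M : ℝ → ℝ} {s : ℝ}
    (hM : DifferentiableAt ℝ M (m * s ^ 2)) :
    HasDerivAt (fun r => M (m * r ^ 2)) (deriv M (m * s ^ 2) * (2 * m * s)) s :=
  hM.hasDerivAt.comp s (hasDerivAt_mul_sq m s)

theorem mul_deriv_kummerAnsatz (m μ : ℝ) {M : ℝ → ℝ} {s : ℝ} (hs : s ≠ 0)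
    (hM : DifferentiableAt ℝ M (m * s ^ 2)) :
    s * deriv (kummerAnsatz m μ M) s = Real.exp (-(m * s ^ 2) / 2) * s ^ μ *
      ((μ - m * s ^ 2) * M (m * s ^ 2) + 2 * (m * s ^ 2) * deriv M (m * s ^ 2)) := by
  have h : HasDerivAt (kummerAnsatz m μ M)
      (Real.exp (-(m * s ^ 2) / 2) * s ^ μ * (μ / s - m * s) * M (m * s ^ 2)
        + Real.exp (-(m * s ^ 2) / 2) * s ^ μ * (deriv M (m * s ^ 2) * (2 * m * s))) s :=
    (hasDerivAt_exp_mul_rpow m μ hs).fun_mul (hasDerivAt_comp_mul_sq m hM)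
  rw [h.deriv]
  field_simp

theorem hasDerivAt_mul_deriv_kummerAnsatz (m μ : ℝ) {M : ℝ → ℝ} (hM : ContDiff ℝ 2 M) {t : ℝ}
    (ht : t ≠ 0) :
    HasDerivAt (fun s => s * deriv (kummerAnsatz m μ M) s)
      (Real.exp (-(m * t ^ 2) / 2) * t ^ μ *
        ((μ / t - m * t) * ((μ - m * t ^ 2) * M (m * t ^ 2)
            + 2 * (m * t ^ 2) * deriv M (m * t ^ 2))
          + (-(2 * m * t) * M (m * t ^ 2) + (μ - m * t ^ 2) * (deriv M (m * t ^ 2) * (2 * m * t))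
            + (2 * (2 * m * t) * deriv M (m * t ^ 2)
              + 2 * (m * t ^ 2) * (deriv (deriv M) (m * t ^ 2) * (2 * m * t)))))) t := by
  have hcongr : (fun s => s * deriv (kummerAnsatz m μ M) s) =ᶠ[𝓝 t] fun s =>
      Real.exp (-(m * s ^ 2) / 2) * s ^ μ *
        ((μ - m * s ^ 2) * M (m * s ^ 2) + 2 * (m * s ^ 2) * deriv M (m * s ^ 2)) := by
    filter_upwards [eventually_ne_nhds ht] with s hs
    exact mul_deriv_kummerAnsatz m μ hs (hM.differentiable two_ne_zero _)
  have hu := hasDerivAt_mul_sq m t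
  refine HasDerivAt.congr_of_eventuallyEq ?_ hcongr
  have hM₀ := hasDerivAt_comp_mul_sq m (hM.differentiable two_ne_zero (m * t ^ 2))
  have hM₁ := hasDerivAt_comp_mul_sq m (hM.differentiable_deriv_two (m * t ^ 2))
  refine ((hasDerivAt_exp_mul_rpow m μ ht).fun_mul (((hu.const_sub μ).fun_mul hM₀).fun_add
    ((hu.const_mul 2).fun_mul hM₁))).congr_deriv ?_
  ring

theorem kummerAnsatz_ode {m μ lam : ℝ} (hm : m ≠ 0) {M : ℝ → ℝ} (hM : ContDiff ℝ 2 M)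
    (hode : ∀ z, z * deriv (deriv M) z + (μ + 1 - z) * deriv M z
      = ((μ + 1) / 2 - lam / (4 * m)) * M z) {t : ℝ} (ht : 0 < t) :
    -(t⁻¹ * deriv (fun s => s * deriv (kummerAnsatz m μ M) s) t)
      + μ ^ 2 / t ^ 2 * kummerAnsatz m μ M t + m ^ 2 * t ^ 2 * kummerAnsatz m μ M t
      = lam * kummerAnsatz m μ M t := by
  rw [(hasDerivAt_mul_deriv_kummerAnsatz m μ hM ht.ne').deriv, kummerAnsatz]
  have h := hode (m * t ^ 2)
  field_simp at h ⊢
  linear_combination (-t ^ 2 / 2) * h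

theorem contDiffOn_kummerAnsatz (m μ : ℝ) {n : ℕ∞ω} {M : ℝ → ℝ} (hM : ContDiff ℝ n M) :
    ContDiffOn ℝ n (kummerAnsatz m μ M) (Ioi 0) := by
  have hu : ContDiff ℝ n fun t : ℝ => m * t ^ 2 := by fun_prop
  have hrpow : ContDiffOn ℝ n (fun t : ℝ => t ^ μ) (Ioi 0) := fun t ht =>
    (Real.contDiffAt_rpow_const_of_ne (ne_of_gt ht)).contDiffWithinAt
  exact ((Real.contDiff_exp.comp (hu.neg.div_const 2)).contDiffOn.mul hrpow).mul
    (hM.comp hu).contDiffOn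

theorem tendsto_kummerAnsatz_nhdsGT_zero (m : ℝ) {μ : ℝ} (hμ : 0 < μ) {M : ℝ → ℝ}
    (hM : Continuous M) : Tendsto (kummerAnsatz m μ M) (𝓝[>] 0) (𝓝 0) := by
  have hcont : ContinuousAt (kummerAnsatz m μ M) 0 := by
    have := Real.continuousAt_rpow_const 0 μ (Or.inr hμ.le)
    unfold kummerAnsatz
    fun_prop
  simpa [kummerAnsatz, Real.zero_rpow hμ.ne'] using hcont.tendsto.mono_left nhdsWithin_le_nhds

theorem kummer_comparison_solution_general
    (m₂ lam με : ℝ) (hm₂ : 0 < m₂) (hμε : 0 < με) :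
    (∀ z : ℝ, Summable (fun k : ℕ =>
      |kummerCoef ((με + 1) / 2 - lam / (4 * m₂)) (με + 1) k * z ^ k|)) ∧
    ContDiffOn ℝ 2
      (fun t : ℝ => Real.exp (-(m₂ * t^2) / 2) * t ^ με *
        kummerM ((με + 1) / 2 - lam / (4 * m₂)) (με + 1) (m₂ * t^2)) (Ioi 0) ∧
    (∀ t ∈ Ioi (0:ℝ),
      -(t⁻¹ * deriv (fun s : ℝ => s * deriv
          (fun r : ℝ => Real.exp (-(m₂ * r^2) / 2) * r ^ με *
            kummerM ((με + 1) / 2 - lam / (4 * m₂)) (με + 1) (m₂ * r^2)) s) t)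
        + με^2 / t^2 * (Real.exp (-(m₂ * t^2) / 2) * t ^ με *
            kummerM ((με + 1) / 2 - lam / (4 * m₂)) (με + 1) (m₂ * t^2))
        + m₂^2 * t^2 * (Real.exp (-(m₂ * t^2) / 2) * t ^ με *
            kummerM ((με + 1) / 2 - lam / (4 * m₂)) (με + 1) (m₂ * t^2))
      = lam * (Real.exp (-(m₂ * t^2) / 2) * t ^ με *
            kummerM ((με + 1) / 2 - lam / (4 * m₂)) (με + 1) (m₂ * t^2))) ∧
    Tendsto
      (fun t : ℝ => Real.exp (-(m₂ * t^2) / 2) * t ^ με *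
        kummerM ((με + 1) / 2 - lam / (4 * m₂)) (με + 1) (m₂ * t^2))
      (𝓝[>] 0) (𝓝 0) := by
  have hb : ∀ k : ℕ, με + 1 + k ≠ 0 := fun k => by positivity
  have hM := contDiff_infty.1 (contDiff_kummerM ((με + 1) / 2 - lam / (4 * m₂)) (με + 1)) 2
  exact ⟨summable_abs_kummerCoef_mul_pow _ _, contDiffOn_kummerAnsatz m₂ με hM,
    fun t ht => kummerAnsatz_ode hm₂.ne' hM (kummerM_ode _ hb) ht,
    tendsto_kummerAnsatz_nhdsGT_zero m₂ hμε hM.continuous⟩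

/-- With `a = (μ_ε+1)/2 − λ/(4m₂)` and `b = μ_ε+1`, Kummer's series
converges absolutely for every real `z`, and `ψ(t) = e^{−m₂t²/2} t^{μ_ε} M(a,b,m₂t²)`
is a `C²` solution on `(0,∞)` of `−t⁻¹(tψ')' + μ_ε² t⁻² ψ + m₂² t² ψ = λψ` with
`ψ(t) → 0` as `t → 0⁺`. -/
theorem kummer_comparison_solution
    (m₂ lam με : ℝ) (hm₂ : 0 < m₂) (hlam : 0 < lam) (hμε : 0 < με) :
    (∀ z : ℝ, Summable (fun k : ℕ =>
      |kummerCoef ((με + 1) / 2 - lam / (4 * m₂)) (με + 1) k * z ^ k|)) ∧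
    ContDiffOn ℝ 2
      (fun t : ℝ => Real.exp (-(m₂ * t^2) / 2) * t ^ με *
        kummerM ((με + 1) / 2 - lam / (4 * m₂)) (με + 1) (m₂ * t^2)) (Ioi 0) ∧
    (∀ t ∈ Ioi (0:ℝ),
      -(t⁻¹ * deriv (fun s : ℝ => s * deriv
          (fun r : ℝ => Real.exp (-(m₂ * r^2) / 2) * r ^ με *
            kummerM ((με + 1) / 2 - lam / (4 * m₂)) (με + 1) (m₂ * r^2)) s) t)
        + με^2 / t^2 * (Real.exp (-(m₂ * t^2) / 2) * t ^ με *
            kummerM ((με + 1) / 2 - lam / (4 * m₂)) (με + 1) (m₂ * t^2))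
        + m₂^2 * t^2 * (Real.exp (-(m₂ * t^2) / 2) * t ^ με *
            kummerM ((με + 1) / 2 - lam / (4 * m₂)) (με + 1) (m₂ * t^2))
      = lam * (Real.exp (-(m₂ * t^2) / 2) * t ^ με *
            kummerM ((με + 1) / 2 - lam / (4 * m₂)) (με + 1) (m₂ * t^2))) ∧
    Tendsto
      (fun t : ℝ => Real.exp (-(m₂ * t^2) / 2) * t ^ με *
        kummerM ((με + 1) / 2 - lam / (4 * m₂)) (με + 1) (m₂ * t^2))
      (𝓝[>] 0) (𝓝 0) :=
  kummer_comparison_solution_general m₂ lam με hm₂ hμε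
end

section
/- Let μ > 0 and m₂ > 0. There exists a constant c > 0, depending only on μ and m₂, such that for every u ∈ C_c^∞((0,∞)) and every t > 0, |u(t)| ≤ c ‖u‖₂, where ‖u‖₂² = ∫₀^∞ ( s|u'(s)|² + μ² s⁻¹|u(s)|² + m₂² s³|u(s)|² ) ds. -/
open MeasureTheory Filter Set Topology

/-- For `μ, m₂ > 0` there is `c = c(μ,m₂) > 0` such that every
test function `u ∈ C_c^∞((0,∞))` satisfies `|u(t)| ≤ c‖u‖₂` for all `t > 0`,
where `‖u‖₂² = ∫₀^∞ (s|u'|² + μ²s⁻¹|u|² + m₂²s³|u|²) ds`. -/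
theorem energy_norm_sup_bound (μ m₂ : ℝ) (hμ : 0 < μ) (hm₂ : 0 < m₂) :
    ∃ c > (0:ℝ), ∀ u : ℝ → ℝ, ContDiff ℝ (⊤ : ℕ∞) u → HasCompactSupport u →
      tsupport u ⊆ Ioi 0 → ∀ t > (0:ℝ),
      |u t| ≤ c * Real.sqrt (∫ s in Ioi (0:ℝ),
        (s * (deriv u s)^2 + μ^2 * s⁻¹ * (u s)^2 + m₂^2 * s^3 * (u s)^2)) := by
  set K : ℝ := max 1 (μ⁻¹^2) with hK
  have hK1 : (1:ℝ) ≤ K := by rw [hK]; exact le_max_left _ _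
  have hKμ : μ⁻¹^2 ≤ K := by rw [hK]; exact le_max_right _ _
  have hK0 : (0:ℝ) < K := lt_of_lt_of_le one_pos hK1
  refine ⟨Real.sqrt K, Real.sqrt_pos.mpr hK0, ?_⟩
  intro u hu hcs hsupp t ht
  -- derivative continuity
  have hud : Differentiable ℝ u := hu.differentiable (by simp)
  have hu' : Continuous (deriv u) := hu.continuous_deriv (by simp)
  -- eventually-zero near 0
  obtain ⟨ε, hε0, hεu⟩ : ∃ ε > (0:ℝ), ∀ s < ε, u s = 0 := by
    rcases eq_empty_or_nonempty (tsupport u) with h | h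
    · exact ⟨1, one_pos, fun s _ => image_eq_zero_of_notMem_tsupport (by simp [h])⟩
    · refine ⟨sInf (tsupport u), hsupp (hcs.sInf_mem h), fun s hs => ?_⟩
      refine image_eq_zero_of_notMem_tsupport (fun hmem => ?_)
      exact absurd (csInf_le hcs.isBounded.bddBelow hmem) (not_le.mpr hs)
  -- the functions
  set F : ℝ → ℝ := fun s => s * (deriv u s)^2 + μ^2 * s⁻¹ * (u s)^2 + m₂^2 * s^3 * (u s)^2 with hF
  set G : ℝ → ℝ := fun s => s * (deriv u s)^2 + s⁻¹ * (u s)^2 with hG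
  have hderiv0 : ∀ x ∉ tsupport u, deriv u x = 0 := by
    intro x hx
    by_contra hne
    exact hx (support_deriv_subset (f := u) hne)
  -- continuity of inv-weighted term
  have hcont_inv : Continuous (fun s : ℝ => s⁻¹ * (u s)^2) := by
    rw [continuous_iff_continuousAt]
    intro x
    by_cases hx : x = 0
    · subst hx
      have : (fun s : ℝ => s⁻¹ * (u s)^2) =ᶠ[nhds (0:ℝ)] fun _ => 0 := by
        filter_upwards [Iio_mem_nhds hε0] with s hs
        simp [hεu s hs]
      exact this.continuousAt
    · exact ((continuousAt_inv₀ hx).mul ((hu.continuous.pow 2).continuousAt))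
  have hcontF : Continuous F := by
    have hFe : F = fun s => s * (deriv u s)^2 + μ^2 * (s⁻¹ * (u s)^2)
        + (m₂^2 * s^3) * (u s)^2 := by
      funext s; simp only [hF]; ring
    rw [hFe]
    exact ((continuous_id.mul (hu'.pow 2)).add (continuous_const.mul hcont_inv)).add
      ((continuous_const.mul (continuous_pow 3)).mul (hu.continuous.pow 2))
  have hcontG : Continuous G :=
    (continuous_id.mul (hu'.pow 2)).add hcont_inv
  -- compact support
  have hcsF : HasCompactSupport F := by
    apply HasCompactSupport.intro hcs
    intro x hx
    simp [hF, hderiv0 x hx, image_eq_zero_of_notMem_tsupport hx]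
  have hcsG : HasCompactSupport G := by
    apply HasCompactSupport.intro hcs
    intro x hx
    simp [hG, hderiv0 x hx, image_eq_zero_of_notMem_tsupport hx]
  have hintF : Integrable F := hcontF.integrable_of_hasCompactSupport hcsF
  have hintG : Integrable G := hcontG.integrable_of_hasCompactSupport hcsG
  -- derivative of u^2 and FTC
  have hD : ∀ x : ℝ, HasDerivAt (fun s => (u s)^2) (2 * u x * deriv u x) x := by
    intro x
    have := ((hud x).hasDerivAt).fun_pow 2
    simpa [mul_comm, mul_assoc, mul_left_comm] using this
  have htend : Tendsto (fun s => (u s)^2) atTop (nhds 0) := by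
    obtain ⟨r, hr⟩ := hcs.isBounded.subset_closedBall 0
    have : (fun s : ℝ => (u s)^2) =ᶠ[atTop] fun _ => 0 := by
      filter_upwards [eventually_gt_atTop r] with s hs
      have : s ∉ tsupport u := fun hmem => by
        have := hr hmem
        simp [Metric.mem_closedBall, Real.dist_eq, abs_le] at this
        linarith [this.2]
      simp [image_eq_zero_of_notMem_tsupport this]
    exact Tendsto.congr' this.symm tendsto_const_nhds
  have hint2 : Integrable (fun s => 2 * u s * deriv u s) := by
    apply Continuous.integrable_of_hasCompactSupport
    · exact (continuous_const.mul hu.continuous).mul hu'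
    · apply HasCompactSupport.intro hcs
      intro x hx
      simp [image_eq_zero_of_notMem_tsupport hx]
  have hftc := integral_Ioi_of_hasDerivAt_of_tendsto
    (f := fun s => (u s)^2) (f' := fun s => 2 * u s * deriv u s) (a := t)
    ((hD t).continuousAt.continuousWithinAt) (fun x _ => hD x)
    hint2.integrableOn htend
  -- u t ^ 2 = ∫_{Ioi t} -(2 u u')
  have hsq : (u t)^2 = ∫ s in Ioi t, -(2 * u s * deriv u s) := by
    rw [integral_neg, hftc]; ring
  -- pointwise bound on Ioi t
  have hpt : ∀ s ∈ Ioi t, -(2 * u s * deriv u s) ≤ G s := by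
    intro s hs
    have hs0 : (0:ℝ) < s := lt_trans ht hs
    have hss : s * s⁻¹ = 1 := mul_inv_cancel₀ hs0.ne'
    have h2 : s * (-(2 * u s * deriv u s)) ≤ s * G s := by
      simp only [hG]
      nlinarith [sq_nonneg (s * deriv u s + u s)]
    exact le_of_mul_le_mul_left h2 hs0
  have step1 : (u t)^2 ≤ ∫ s in Ioi t, G s := by
    rw [hsq]
    exact setIntegral_mono_on hint2.neg.integrableOn hintG.integrableOn
      measurableSet_Ioi hpt
  have hGnn : ∀ s ∈ Ioi (0:ℝ), 0 ≤ G s := by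
    intro s hs
    have hs0 : (0:ℝ) < s := hs
    have : 0 ≤ s⁻¹ := (inv_pos.mpr hs0).le
    positivity
  have step2 : ∫ s in Ioi t, G s ≤ ∫ s in Ioi (0:ℝ), G s := by
    apply setIntegral_mono_set hintG.integrableOn
    · filter_upwards [ae_restrict_mem measurableSet_Ioi] with s hs using hGnn s hs
    · exact HasSubset.Subset.eventuallyLE (Ioi_subset_Ioi ht.le)
  have step3 : ∫ s in Ioi (0:ℝ), G s ≤ K * ∫ s in Ioi (0:ℝ), F s := by
    rw [← integral_const_mul]
    apply setIntegral_mono_on hintG.integrableOn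
      (hintF.const_mul K).integrableOn measurableSet_Ioi
    intro s hs
    have hs0 : (0:ℝ) < s := hs
    have hsinv : (0:ℝ) ≤ s⁻¹ := (inv_pos.mpr hs0).le
    have hμ2 : μ⁻¹^2 * μ^2 = 1 := by
      field_simp
    simp only [hG, hF]
    have h1 : s * (deriv u s)^2 ≤ K * (s * (deriv u s)^2) :=
      le_mul_of_one_le_left (by positivity) hK1
    have h2 : s⁻¹ * (u s)^2 ≤ K * (μ^2 * s⁻¹ * (u s)^2) := by
      have : s⁻¹ * (u s)^2 = (μ⁻¹^2 * μ^2) * (s⁻¹ * (u s)^2) := by rw [hμ2, one_mul]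
      rw [this]
      have hnn : (0:ℝ) ≤ μ^2 * (s⁻¹ * (u s)^2) := by positivity
      nlinarith [mul_le_mul_of_nonneg_right hKμ hnn]
    have h3 : (0:ℝ) ≤ K * (m₂^2 * s^3 * (u s)^2) := by positivity
    nlinarith
  have hFnn : 0 ≤ ∫ s in Ioi (0:ℝ), F s := by
    apply setIntegral_nonneg measurableSet_Ioi
    intro s hs
    have hs0 : (0:ℝ) < s := hs
    have : 0 ≤ s⁻¹ := (inv_pos.mpr hs0).le
    simp only [hF]
    positivity
  have key : (u t)^2 ≤ K * ∫ s in Ioi (0:ℝ), F s := by linarith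
  calc |u t| = Real.sqrt ((u t)^2) := (Real.sqrt_sq_eq_abs _).symm
    _ ≤ Real.sqrt (K * ∫ s in Ioi (0:ℝ), F s) := Real.sqrt_le_sqrt key
    _ = Real.sqrt K * Real.sqrt (∫ s in Ioi (0:ℝ), F s) := Real.sqrt_mul hK0.le _
end

section
/- Let μ̃ > 0, m₂ > 0, λ > 0 be real constants, let q be a real exponent with −2 < q < 2, and let t₀ > 0. Let ũ : (0,t₀] → ℝ be a C² solution of −ũ''(t) + μ̃² t⁻² ũ(t) + m₂² t² ũ(t) = λ t^q ũ(t) on (0,t₀] with ũ(t₀) = 0, ũ(t) → 0 as t → 0⁺, ũ'(t) ũ(t) → 0 as t → 0⁺, and ∫₀^{t₀}( |ũ'(t)|² + t⁻²|ũ(t)|² ) dt < ∞. Then ∫₀^{t₀} μ̃² t⁻² ũ(t)² dt ≤ λ t₀^{2+q} ∫₀^{t₀} t⁻² ũ(t)² dt. In particular, if λ t₀^{2+q} < μ̃², then ũ vanishes identically on (0,t₀]. -/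
open MeasureTheory Filter Set Topology

/-! Multiplying the equation by `u` and integrating by parts over `[a, b] ⊆ (0, t₀)` gives
`∫ₐᵇ (μ̃² t⁻² + m₂² t² − λ t^q) u² ≤ (u'u)(b) − (u'u)(a)`, and since `λ t^q ≤ λ t₀^{2+q} t⁻²`
on `(0, t₀]`, the left side dominates `(μ̃² − λ t₀^{2+q}) ∫ₐᵇ t⁻² u²`. Let `a → 0⁺` using the
vanishing flux, and `b → t₀⁻` along points where `u'u ≤ 0`; these exist arbitrarily close to `t₀`,
since otherwise `u²` would increase strictly up to `u(t₀)² = 0`. -/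

theorem intervalIntegral_le_deriv_mul_sub {u g : ℝ → ℝ} {s : Set ℝ} {a b : ℝ}
    (hs : IsOpen s) (hu : ContDiffOn ℝ 2 u s) (hab : a ≤ b) (hsub : Icc a b ⊆ s)
    (hg : IntegrableOn g (Icc a b))
    (hgu : ∀ x ∈ Icc a b, g x ≤ deriv (deriv u) x * u x) :
    ∫ x in a..b, g x ≤ deriv u b * u b - deriv u a * u a := by
  have hu' : ContDiffOn ℝ 1 (deriv u) s := hu.deriv_of_isOpen hs (by norm_num)
  have hsub' : uIcc a b ⊆ s := by rwa [uIcc_of_le hab]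
  have hcont : ContinuousOn (deriv u) (uIcc a b) := hu'.continuousOn.mono hsub'
  have hcont' : ContinuousOn (deriv (deriv u)) (uIcc a b) :=
    (hu'.continuousOn_deriv_of_isOpen hs le_rfl).mono hsub'
  calc ∫ x in a..b, g x
      ≤ ∫ x in a..b, deriv (deriv u) x * u x + deriv u x * deriv u x := by
        refine intervalIntegral.integral_mono_on hab
          ((intervalIntegrable_iff_integrableOn_Icc_of_le hab).mpr hg) ?_ fun x hx => ?_
        · exact (hcont'.mul (hu.continuousOn.mono hsub')).intervalIntegrable.add
            (hcont.mul hcont).intervalIntegrable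
        · nlinarith [hgu x hx, mul_self_nonneg (deriv u x)]
    _ = deriv u b * u b - deriv u a * u a := by
        refine intervalIntegral.integral_deriv_mul_eq_sub (fun x hx => ?_) (fun x hx => ?_)
          hcont'.intervalIntegrable hcont.intervalIntegrable
        · exact (hu'.differentiableOn one_ne_zero).hasDerivAt (hs.mem_nhds (hsub' hx))
        · exact (hu.differentiableOn two_ne_zero).hasDerivAt (hs.mem_nhds (hsub' hx))

theorem frequently_deriv_mul_nonpos_nhdsLT {u u' : ℝ → ℝ} {c t₀ : ℝ} (hct : c < t₀)
    (hcont : ContinuousOn u (Ioc c t₀)) (hderiv : ∀ x ∈ Ioo c t₀, HasDerivAt u (u' x) x)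
    (hzero : u t₀ = 0) : ∃ᶠ b in 𝓝[<] t₀, u' b * u b ≤ 0 := by
  rw [(nhdsLT_basis t₀).frequently_iff]
  intro d hd
  by_contra! hpos
  set e := max c d
  have hmono : StrictMonoOn (fun x => u x ^ 2) (Ioc e t₀) := by
    refine strictMonoOn_of_deriv_pos (convex_Ioc e t₀)
      ((hcont.mono (Ioc_subset_Ioc_left (le_max_left c d))).pow 2) fun x hx => ?_
    rw [interior_Ioc] at hx
    rw [((hderiv x ⟨(le_max_left c d).trans_lt hx.1, hx.2⟩).fun_pow 2).deriv]
    norm_num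
    nlinarith [hpos x ⟨(le_max_right c d).trans_lt hx.1, hx.2⟩]
  have he : e < t₀ := max_lt hct hd
  have hlt := hmono ⟨by linarith, by linarith⟩ ⟨he, le_rfl⟩ (by linarith : (e + t₀) / 2 < t₀)
  simp only [hzero] at hlt
  nlinarith

theorem setIntegral_Ioo_nonpos_of_le_sub {g φ : ℝ → ℝ} {t₀ : ℝ} (ht₀ : 0 < t₀)
    (hg : IntegrableOn g (Ioo 0 t₀))
    (hle : ∀ a b, 0 < a → a ≤ b → b < t₀ → ∫ x in a..b, g x ≤ φ b - φ a)
    (hφ₀ : Tendsto φ (𝓝[>] 0) (𝓝 0)) (hφt₀ : ∃ᶠ b in 𝓝[<] t₀, φ b ≤ 0) :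
    ∫ x in Ioo 0 t₀, g x ≤ 0 := by
  have hgi : IntervalIntegrable g volume 0 t₀ :=
    (intervalIntegrable_iff_integrableOn_Ioo_of_le ht₀.le).mpr hg
  set F := fun x => ∫ t in (0:ℝ)..x, g t
  have hF : ContinuousOn F (Icc 0 t₀) := by
    simpa [uIcc_of_le ht₀.le] using
      intervalIntegral.continuousOn_primitive_interval' hgi left_mem_uIcc
  have hFb : ∀ b ∈ Ioo 0 t₀, φ b ≤ 0 → F b ≤ 0 := by
    intro b hb hφb
    have hF₀ : Tendsto F (𝓝[>] 0) (𝓝 0) := by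
      simpa [F] using
        ((hF 0 ⟨le_rfl, ht₀.le⟩).mono_of_mem_nhdsWithin (Icc_mem_nhdsGT ht₀)).tendsto
    refine le_of_tendsto_of_tendsto (by simpa using tendsto_const_nhds.sub hF₀)
      (by simpa using hφ₀.neg) ?_
    filter_upwards [Ioo_mem_nhdsGT hb.1] with a ha
    have hsub : ∀ c ∈ Icc 0 t₀, uIcc 0 c ⊆ uIcc 0 t₀ := fun c hc =>
      uIcc_subset_uIcc left_mem_uIcc (by rwa [uIcc_of_le ht₀.le])
    rw [intervalIntegral.integral_interval_sub_left (hgi.mono_set (hsub b ⟨hb.1.le, hb.2.le⟩))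
      (hgi.mono_set (hsub a ⟨ha.1.le, (ha.2.trans hb.2).le⟩))]
    linarith [hle a b ha.1 ha.2.le hb.2]
  have hfreq : ∃ᶠ b in 𝓝[<] t₀, F b ≤ 0 :=
    (hφt₀.and_eventually (Ioo_mem_nhdsLT ht₀)).mono fun b hb => hFb b hb.2 hb.1
  have hlim : Tendsto F (𝓝[<] t₀) (𝓝 (F t₀)) :=
    ((hF t₀ ⟨ht₀.le, le_rfl⟩).mono_of_mem_nhdsWithin (Icc_mem_nhdsLT ht₀)).tendsto
  rw [← integral_Ioc_eq_integral_Ioo, ← intervalIntegral.integral_of_le ht₀.le]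
  exact le_of_tendsto_of_frequently hlim hfreq

theorem sub_mul_sq_div_sq_le_mul_of_eq {μt m₂ lam q t₀ x v w : ℝ} (hlam : 0 ≤ lam) (hq : 0 ≤ 2 + q)
    (hx : 0 < x) (hxt : x ≤ t₀)
    (hw : -w + μt ^ 2 / x ^ 2 * v + m₂ ^ 2 * x ^ 2 * v = lam * x ^ q * v) :
    (μt ^ 2 - lam * t₀ ^ (2 + q)) * (v ^ 2 / x ^ 2) ≤ w * v := by
  have hpow : x ^ q * x ^ 2 ≤ t₀ ^ (2 + q) := by
    rw [← Real.rpow_natCast, ← Real.rpow_add hx, add_comm]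
    exact_mod_cast Real.rpow_le_rpow hx.le hxt hq
  have hx2 : x ^ 2 * (v ^ 2 / x ^ 2) = v ^ 2 := by field_simp
  have hwv : w * v = μt ^ 2 * (v ^ 2 / x ^ 2) + m₂ ^ 2 * x ^ 2 * v ^ 2
      - lam * (x ^ q * x ^ 2) * (v ^ 2 / x ^ 2) := by
    linear_combination (-v) * hw + lam * x ^ q * hx2
  rw [hwv]
  nlinarith [mul_le_mul_of_nonneg_left hpow
    (mul_nonneg hlam (by positivity : 0 ≤ v ^ 2 / x ^ 2)), sq_nonneg (m₂ * x * v)]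

theorem eqOn_zero_of_setIntegral_eq_zero_of_nonneg {X : Type*} [TopologicalSpace X]
    [MeasurableSpace X] [OpensMeasurableSpace X] {μ : Measure X} [μ.IsOpenPosMeasure]
    {f : X → ℝ} {U : Set X} (hU : IsOpen U) (hf : ContinuousOn f U) (hf₀ : ∀ x ∈ U, 0 ≤ f x)
    (hfi : IntegrableOn f U μ) (h : ∫ x in U, f x ∂μ = 0) : EqOn f 0 U :=
  Measure.eqOn_open_of_ae_eq
    ((setIntegral_eq_zero_iff_of_nonneg_ae (ae_restrict_of_forall_mem hU.measurableSet hf₀)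
      hfi).mp h) hU hf continuousOn_const

theorem eigenspace_one_dimensional_step_general
    (μt m₂ lam q t₀ : ℝ) (hlam : 0 < lam)
    (hq₁ : -2 < q) (ht₀ : 0 < t₀) (u : ℝ → ℝ)
    (hC2 : ContDiffOn ℝ 2 u (Ioo 0 t₀))
    (hODE : ∀ t ∈ Ioo (0:ℝ) t₀,
      -(deriv (deriv u) t) + μt^2 / t^2 * u t + m₂^2 * t^2 * u t = lam * t ^ q * u t)
    (hcont : ContinuousOn u (Ioc 0 t₀)) (hut₀ : u t₀ = 0)
    (hflux : Tendsto (fun t => deriv u t * u t) (𝓝[>] 0) (𝓝 0))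
    (hnorm : IntegrableOn (fun t => (deriv u t)^2 + (u t)^2 / t^2) (Ioo 0 t₀)) :
    (∫ t in Ioo (0:ℝ) t₀, μt^2 / t^2 * (u t)^2)
      ≤ lam * t₀ ^ (2 + q) * ∫ t in Ioo (0:ℝ) t₀, (u t)^2 / t^2 ∧
    (lam * t₀ ^ (2 + q) < μt^2 → ∀ t ∈ Ioc (0:ℝ) t₀, u t = 0) := by
  have hcont' : ContinuousOn (fun t => u t ^ 2 / t ^ 2) (Ioo 0 t₀) :=
    (hC2.continuousOn.pow 2).div (continuousOn_pow 2) fun t ht => pow_ne_zero 2 ht.1.ne'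
  have hint : IntegrableOn (fun t => u t ^ 2 / t ^ 2) (Ioo 0 t₀) :=
    hnorm.mono' (hcont'.aestronglyMeasurable measurableSet_Ioo) <|
      ae_restrict_of_forall_mem measurableSet_Ioo fun t _ => by
        rw [Real.norm_of_nonneg (by positivity)]; linarith [sq_nonneg (deriv u t)]
  have hKJ : (μt ^ 2 - lam * t₀ ^ (2 + q)) * ∫ t in Ioo 0 t₀, u t ^ 2 / t ^ 2 ≤ 0 := by
    have hderiv : ∀ x ∈ Ioo 0 t₀, HasDerivAt u (deriv u x) x := fun x hx =>
      (hC2.differentiableOn two_ne_zero).hasDerivAt (isOpen_Ioo.mem_nhds hx)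
    rw [← integral_const_mul]
    refine setIntegral_Ioo_nonpos_of_le_sub ht₀ (hint.const_mul _) (fun a b ha hab hb => ?_) hflux
      (frequently_deriv_mul_nonpos_nhdsLT ht₀ hcont hderiv hut₀)
    have hab₀ : Icc a b ⊆ Ioo 0 t₀ := Icc_subset_Ioo ha hb
    exact intervalIntegral_le_deriv_mul_sub isOpen_Ioo hC2 hab hab₀
      (IntegrableOn.mono_set (hint.const_mul _) hab₀) fun x hx =>
        sub_mul_sq_div_sq_le_mul_of_eq hlam.le (by linarith) (hab₀ hx).1 (hab₀ hx).2.le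
          (hODE x (hab₀ hx))
  have hμJ : ∫ t in Ioo 0 t₀, μt ^ 2 / t ^ 2 * u t ^ 2
      = μt ^ 2 * ∫ t in Ioo 0 t₀, u t ^ 2 / t ^ 2 := by
    rw [← integral_const_mul]; congr 1; ext t; ring
  have hJ₀ : 0 ≤ ∫ t in Ioo 0 t₀, u t ^ 2 / t ^ 2 :=
    setIntegral_nonneg measurableSet_Ioo fun t _ => by positivity
  refine ⟨by linarith, fun hK t ht => ?_⟩
  rcases ht.2.eq_or_lt with rfl | ht₁
  · exact hut₀
  have hJ : ∫ t in Ioo 0 t₀, u t ^ 2 / t ^ 2 = 0 := by nlinarith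
  simpa [ht.1.ne'] using
    eqOn_zero_of_setIntegral_eq_zero_of_nonneg isOpen_Ioo hcont' (fun t _ => by positivity) hint hJ
      ⟨ht.1, ht₁⟩

/-- A finite-energy solution of `−ũ'' + μ̃² t⁻² ũ + m₂² t² ũ = λ t^q ũ`
on `(0,t₀]` vanishing at `t₀` and (with its flux) at `0⁺` satisfies
`∫ μ̃² t⁻² ũ² ≤ λ t₀^{2+q} ∫ t⁻² ũ²`; in particular `λ t₀^{2+q} < μ̃²` forces `ũ ≡ 0`. -/
theorem eigenspace_one_dimensional_step
    (μt m₂ lam q t₀ : ℝ) (hμ : 0 < μt) (hm₂ : 0 < m₂) (hlam : 0 < lam)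
    (hq₁ : -2 < q) (hq₂ : q < 2) (ht₀ : 0 < t₀) (u : ℝ → ℝ)
    (hC2 : ContDiffOn ℝ 2 u (Ioo 0 t₀))
    (hODE : ∀ t ∈ Ioo (0:ℝ) t₀,
      -(deriv (deriv u) t) + μt^2 / t^2 * u t + m₂^2 * t^2 * u t = lam * t ^ q * u t)
    (hcont : ContinuousOn u (Ioc 0 t₀)) (hut₀ : u t₀ = 0)
    (hlim : Tendsto u (𝓝[>] 0) (𝓝 0))
    (hflux : Tendsto (fun t => deriv u t * u t) (𝓝[>] 0) (𝓝 0))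
    (hnorm : IntegrableOn (fun t => (deriv u t)^2 + (u t)^2 / t^2) (Ioo 0 t₀)) :
    (∫ t in Ioo (0:ℝ) t₀, μt^2 / t^2 * (u t)^2)
      ≤ lam * t₀ ^ (2 + q) * ∫ t in Ioo (0:ℝ) t₀, (u t)^2 / t^2 ∧
    (lam * t₀ ^ (2 + q) < μt^2 → ∀ t ∈ Ioc (0:ℝ) t₀, u t = 0) :=
  eigenspace_one_dimensional_step_general μt m₂ lam q t₀ hlam hq₁ ht₀ u hC2 hODE hcont hut₀ hflux
    hnorm
end

section
/- Let μ̃ > 0, m₂ > 0, λ > 0, let q be a real exponent with −2 < q < 2, and let 0 < t₀ < 1. Let ũ : (0,t₀] → ℝ be a C² solution of −ũ''(t) + μ̃² t⁻² ũ(t) + m₂² t² ũ(t) = λ t^q ũ(t) with ũ(t) > 0 on (0,t₀], and suppose there exist c > 0 and ε₁ > 0 with ũ(t) ≤ c t^{1+ε₁} for all t ∈ (0,t₀]. Then there exists t₁ ∈ (0,t₀] such that ũ''(t) > 0 and ũ'(t) > 0 for all t ∈ (0,t₁), and moreover ũ'(t) → 0 and ũ(t)/t → 0 as t → 0⁺;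 in particular, ũ extends to a C¹ function on [0,t₁] with ũ(0) = 0 and ũ'(0) = 0, and ũ is strictly convex on (0,t₁). -/
open Filter Set Topology

/-!
Because `q + 2 > 0`, the term `λ t^q` is dominated by `μ̃² t⁻²` near the origin, so
`ũ'' = (μ̃² t⁻² + m₂² t² - λ t^q) ũ > 0` there and `ũ` is strictly convex. For a convex
function vanishing at `0⁺`, secant slopes squeeze the derivative:
`ũ(t)/t ≤ ũ'(t) ≤ (ũ(2t) - ũ(t))/t ≤ 2 ũ(2t)/(2t)`, while the decay bound gives
`0 < ũ(t)/t ≤ c t^{ε₁} → 0`. Hence `ũ' > 0` and `ũ' → 0`, and extending `ũ` by `0` at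
the origin gives a `C¹` function, its one-sided derivative at `0` being the limit of `ũ'`.
-/

lemma tendsto_rpow_nhdsGT_zero {p : ℝ} (hp : 0 < p) :
    Tendsto (fun t : ℝ => t ^ p) (𝓝[>] 0) (𝓝 0) :=
  ((Real.continuous_rpow_const hp.le).tendsto' 0 0 (Real.zero_rpow hp.ne')).mono_left
    nhdsWithin_le_nhds

lemma tendsto_const_mul_nhdsGT_zero {a : ℝ} (ha : 0 < a) :
    Tendsto (fun t : ℝ => a * t) (𝓝[>] 0) (𝓝[>] 0) := by
  refine tendsto_nhdsWithin_iff.2 ⟨?_, ?_⟩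
  · exact ((continuous_const_mul a).tendsto' 0 0 (mul_zero a)).mono_left nhdsWithin_le_nhds
  · filter_upwards [self_mem_nhdsWithin] with t (ht : 0 < t)
    exact mul_pos ha ht

lemma tendsto_nhdsGT_zero_of_tendsto_div_self {f : ℝ → ℝ} {L : ℝ}
    (h : Tendsto (fun t => f t / t) (𝓝[>] 0) (𝓝 L)) : Tendsto f (𝓝[>] 0) (𝓝 0) := by
  have hid : Tendsto id (𝓝[>] (0 : ℝ)) (𝓝 0) := tendsto_id.mono_left nhdsWithin_le_nhds
  have hmul := h.mul hid
  rw [mul_zero] at hmul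
  refine hmul.congr' ?_
  filter_upwards [self_mem_nhdsWithin] with t (ht : 0 < t)
  exact div_mul_cancel₀ _ ht.ne'

lemma tendsto_div_self_of_le_mul_rpow {f : ℝ → ℝ} {c ε : ℝ} (hε : 0 < ε)
    (hnonneg : ∀ᶠ t in 𝓝[>] 0, 0 ≤ f t)
    (hle : ∀ᶠ t in 𝓝[>] 0, f t ≤ c * t ^ (1 + ε)) :
    Tendsto (fun t => f t / t) (𝓝[>] 0) (𝓝 0) := by
  have hlim : Tendsto (fun t : ℝ => c * t ^ ε) (𝓝[>] 0) (𝓝 0) := by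
    simpa using (tendsto_rpow_nhdsGT_zero hε).const_mul c
  refine tendsto_of_tendsto_of_tendsto_of_le_of_le' tendsto_const_nhds hlim ?_ ?_
  · filter_upwards [hnonneg, self_mem_nhdsWithin] with t hf (ht : 0 < t)
    exact div_nonneg hf ht.le
  · filter_upwards [hle, self_mem_nhdsWithin] with t hf (ht : 0 < t)
    rw [div_le_iff₀ ht]
    calc f t ≤ c * t ^ (1 + ε) := hf
      _ = c * t ^ ε * t := by rw [Real.rpow_add ht, Real.rpow_one]; ring

lemma eventually_mul_rpow_lt_div_sq {q : ℝ} (hq : -2 < q) (lam : ℝ) {M : ℝ} (hM : 0 < M) :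
    ∀ᶠ t in 𝓝[>] (0 : ℝ), lam * t ^ q < M / t ^ 2 := by
  have hlim : Tendsto (fun t : ℝ => lam * t ^ (q + 2)) (𝓝[>] 0) (𝓝 0) := by
    simpa using (tendsto_rpow_nhdsGT_zero (by linarith : 0 < q + 2)).const_mul lam
  filter_upwards [hlim.eventually (gt_mem_nhds hM), self_mem_nhdsWithin] with t ht (ht0 : 0 < t)
  rw [Real.rpow_add ht0, Real.rpow_two, ← mul_assoc] at ht
  rwa [lt_div_iff₀ (by positivity)]

namespace ConvexOn

variable {f : ℝ → ℝ} {b t : ℝ}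

lemma div_le_deriv_of_tendsto_nhdsGT_zero (hf : ConvexOn ℝ (Ioo 0 b) f)
    (hf0 : Tendsto f (𝓝[>] 0) (𝓝 0)) (ht : t ∈ Ioo 0 b) (hd : DifferentiableAt ℝ f t) :
    f t / t ≤ deriv f t := by
  have hslope : Tendsto (fun s => slope f s t) (𝓝[>] 0) (𝓝 (f t / t)) := by
    have hden : Tendsto (fun s : ℝ => t - s) (𝓝[>] 0) (𝓝 (t - 0)) :=
      tendsto_const_nhds.sub (tendsto_id.mono_left nhdsWithin_le_nhds)
    have h := ((tendsto_const_nhds (x := f t)).sub hf0).div hden (by simpa using ht.1.ne')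
    simpa only [slope_def_field, sub_zero, Pi.div_def] using h
  refine le_of_tendsto hslope ?_
  filter_upwards [Ioo_mem_nhdsGT ht.1] with s hs
  exact hf.slope_le_deriv ⟨hs.1, hs.2.trans ht.2⟩ ht hs.2 hd

lemma deriv_le_div_of_nonneg (hf : ConvexOn ℝ (Ioo 0 b) f)
    (hnonneg : ∀ s ∈ Ioo 0 b, 0 ≤ f s)
    (ht : 0 < t) (h2t : 2 * t < b) (hd : DifferentiableAt ℝ f t) :
    deriv f t ≤ f (2 * t) / t := by
  calc deriv f t ≤ slope f t (2 * t) :=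
        hf.deriv_le_slope ⟨ht, by linarith⟩ ⟨by linarith, h2t⟩ (by linarith) hd
    _ = (f (2 * t) - f t) / t := by rw [slope_def_field, two_mul, add_sub_cancel_right]
    _ ≤ f (2 * t) / t := by
        gcongr
        linarith [hnonneg t ⟨ht, by linarith⟩]

lemma tendsto_deriv_nhdsGT_zero (hf : ConvexOn ℝ (Ioo 0 b) f) (hb : 0 < b)
    (hd : DifferentiableOn ℝ f (Ioo 0 b)) (hnonneg : ∀ s ∈ Ioo 0 b, 0 ≤ f s)
    (hslope : Tendsto (fun t => f t / t) (𝓝[>] 0) (𝓝 0)) :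
    Tendsto (deriv f) (𝓝[>] 0) (𝓝 0) := by
  have hupper : Tendsto (fun t => 2 * (f (2 * t) / (2 * t))) (𝓝[>] 0) (𝓝 0) := by
    simpa using (hslope.comp (tendsto_const_mul_nhdsGT_zero two_pos)).const_mul 2
  have hf0 := tendsto_nhdsGT_zero_of_tendsto_div_self hslope
  have hmem := Ioo_mem_nhdsGT (half_pos hb)
  refine tendsto_of_tendsto_of_tendsto_of_le_of_le' hslope hupper ?_ ?_ <;>
    filter_upwards [hmem] with t ht <;>
    have htb : t ∈ Ioo 0 b := ⟨ht.1, ht.2.trans (half_lt_self hb)⟩ <;>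
    have hdt := (hd t htb).differentiableAt (Ioo_mem_nhds htb.1 htb.2)
  · exact hf.div_le_deriv_of_tendsto_nhdsGT_zero hf0 htb hdt
  · calc deriv f t ≤ f (2 * t) / t :=
          hf.deriv_le_div_of_nonneg hnonneg ht.1 (by linarith [ht.2]) hdt
      _ = 2 * (f (2 * t) / (2 * t)) := by field_simp

end ConvexOn

section UpdateAtEndpoint

variable {f : ℝ → ℝ} {a b c y L : ℝ}

lemma eventuallyEq_update_nhds_of_ne {x : ℝ} (hx : x ≠ a) :
    Function.update f a y =ᶠ[𝓝 x] f := by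
  filter_upwards [eventually_ne_nhds hx] with s hs
  exact Function.update_of_ne hs _ _

lemma hasDerivWithinAt_update_Ici_of_tendsto (hf : DifferentiableOn ℝ f (Ioo a c)) (hac : a < c)
    (hf_lim : Tendsto f (𝓝[>] a) (𝓝 y)) (hf'_lim : Tendsto (deriv f) (𝓝[>] a) (𝓝 L)) :
    HasDerivWithinAt (Function.update f a y) L (Ici a) a := by
  have hIoi : Function.update f a y =ᶠ[𝓝[>] a] f := by
    filter_upwards [self_mem_nhdsWithin] with s (hs : a < s)
    exact Function.update_of_ne hs.ne' _ _
  refine hasDerivWithinAt_Ici_of_tendsto_deriv (s := Ioo a c) ?_ ?_ (Ioo_mem_nhdsGT hac) ?_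
  · exact hf.congr fun x hx => Function.update_of_ne hx.1.ne' _ _
  · rw [ContinuousWithinAt, Function.update_self]
    exact (hf_lim.congr' hIoi.symm).mono_left (nhdsWithin_mono a Ioo_subset_Ioi_self)
  · refine hf'_lim.congr' ?_
    filter_upwards [self_mem_nhdsWithin] with s (hs : a < s)
    exact (eventuallyEq_update_nhds_of_ne hs.ne').deriv_eq.symm

lemma contDiffOn_update_Icc_of_tendsto (hf : ContDiffOn ℝ 1 f (Ioo a c)) (hab : a < b)
    (hbc : b < c) (hf_lim : Tendsto f (𝓝[>] a) (𝓝 y))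
    (hf'_lim : Tendsto (deriv f) (𝓝[>] a) (𝓝 L)) :
    ContDiffOn ℝ 1 (Function.update f a y) (Icc a b) ∧
      derivWithin (Function.update f a y) (Icc a b) a = L := by
  have hfd : DifferentiableOn ℝ f (Ioo a c) := hf.differentiableOn one_ne_zero
  have hUD : UniqueDiffOn ℝ (Icc a b) := uniqueDiffOn_Icc hab
  have hderiv_a : HasDerivWithinAt (Function.update f a y) L (Icc a b) a :=
    (hasDerivWithinAt_update_Ici_of_tendsto hfd (hab.trans hbc) hf_lim hf'_lim).mono
      Icc_subset_Ici_self
  have hmem : ∀ x ∈ Ioc a b, Ioo a c ∈ 𝓝 x :=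
    fun x hx => Ioo_mem_nhds hx.1 (hx.2.trans_lt hbc)
  have hderiv_gt : ∀ x ∈ Ioc a b, HasDerivAt (Function.update f a y) (deriv f x) x :=
    fun x hx => (eventuallyEq_update_nhds_of_ne hx.1.ne').hasDerivAt_iff.2
      ((hfd.differentiableAt (hmem x hx)).hasDerivAt)
  have hderivWithin : EqOn (derivWithin (Function.update f a y) (Icc a b))
      (Function.update (deriv f) a L) (Icc a b) := by
    intro x hx
    rcases hx.1.eq_or_lt with rfl | hax
    · rw [Function.update_self]
      exact hderiv_a.derivWithin (hUD _ hx)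
    · rw [Function.update_of_ne hax.ne']
      exact (hderiv_gt x ⟨hax, hx.2⟩).hasDerivWithinAt.derivWithin (hUD x hx)
  refine ⟨(contDiffOn_one_iff_derivWithin hUD).2 ⟨fun x hx => ?_, ?_⟩,
    hderiv_a.derivWithin (hUD a ⟨le_rfl, hab.le⟩)⟩
  · rcases hx.1.eq_or_lt with rfl | hax
    · exact hderiv_a.differentiableWithinAt
    · exact (hderiv_gt x ⟨hax, hx.2⟩).differentiableAt.differentiableWithinAt
  · refine ContinuousOn.congr (fun x hx => ?_) hderivWithin
    rcases hx.1.eq_or_lt with rfl | hax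
    · refine continuousWithinAt_update_same.2 (hf'_lim.mono_left (nhdsWithin_mono _ ?_))
      exact fun s hs => lt_of_le_of_ne hs.1.1 (Ne.symm hs.2)
    · have hcont := hf.continuousOn_deriv_of_isOpen isOpen_Ioo le_rfl
      exact ((continuousAt_update_of_ne hax.ne').2
        (hcont.continuousAt (hmem x ⟨hax, hx.2⟩))).continuousWithinAt

end UpdateAtEndpoint

theorem positive_solution_C1_extension_general
    (μt m₂ lam q t₀ c ε₁ : ℝ) (hμ : 0 < μt)
    (hq₁ : -2 < q) (ht₀ : 0 < t₀)
    (hε₁ : 0 < ε₁) (u : ℝ → ℝ)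
    (hC2 : ContDiffOn ℝ 2 u (Ioo 0 t₀))
    (hODE : ∀ t ∈ Ioo (0:ℝ) t₀,
      -(deriv (deriv u) t) + μt^2 / t^2 * u t + m₂^2 * t^2 * u t = lam * t ^ q * u t)
    (hpos : ∀ t ∈ Ioc (0:ℝ) t₀, 0 < u t)
    (hbound : ∀ t ∈ Ioc (0:ℝ) t₀, u t ≤ c * t ^ (1 + ε₁)) :
    ∃ t₁ ∈ Ioc (0:ℝ) t₀,
      (∀ t ∈ Ioo (0:ℝ) t₁, 0 < deriv (deriv u) t ∧ 0 < deriv u t) ∧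
      Tendsto (deriv u) (𝓝[>] 0) (𝓝 0) ∧
      Tendsto (fun t => u t / t) (𝓝[>] 0) (𝓝 0) ∧
      StrictConvexOn ℝ (Ioo 0 t₁) u ∧
      ∃ w : ℝ → ℝ, EqOn w u (Ioo 0 t₁) ∧ ContDiffOn ℝ 1 w (Icc 0 t₁) ∧
        w 0 = 0 ∧ derivWithin w (Icc 0 t₁) 0 = 0 := by
  obtain ⟨δ, hδ, hcoef⟩ := mem_nhdsGT_iff_exists_Ioo_subset.1
    (eventually_mul_rpow_lt_div_sq hq₁ lam (pow_pos hμ 2))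
  set t₁ := min δ (t₀ / 2)
  have ht₁ : 0 < t₁ := lt_min hδ (half_pos ht₀)
  have ht₁t₀ : t₁ < t₀ := (min_le_right _ _).trans_lt (half_lt_self ht₀)
  have hsub : Ioo 0 t₁ ⊆ Ioo 0 t₀ := Ioo_subset_Ioo_right ht₁t₀.le
  have hu : ∀ t ∈ Ioo 0 t₁, 0 < u t := fun t ht => hpos t ⟨ht.1, (hsub ht).2.le⟩
  have hu'' : ∀ t ∈ Ioo 0 t₁, 0 < deriv (deriv u) t := fun t ht => by
    have hK : lam * t ^ q < μt ^ 2 / t ^ 2 := hcoef ⟨ht.1, ht.2.trans_le (min_le_left _ _)⟩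
    nlinarith [hODE t (hsub ht), hu t ht, mul_nonneg (sq_nonneg (m₂ * t)) (hu t ht).le]
  have hconv : StrictConvexOn ℝ (Ioo 0 t₁) u :=
    strictConvexOn_of_deriv2_pos' (convex_Ioo 0 t₁) (hC2.continuousOn.mono hsub)
      (by simpa only [Function.iterate_succ, Function.iterate_zero, Function.comp_apply,
        Function.id_comp] using hu'')
  have hslope : Tendsto (fun t => u t / t) (𝓝[>] 0) (𝓝 0) := by
    refine tendsto_div_self_of_le_mul_rpow (c := c) hε₁ ?_ ?_ <;>
      filter_upwards [Ioo_mem_nhdsGT ht₀] with t ht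
    exacts [(hpos t ⟨ht.1, ht.2.le⟩).le, hbound t ⟨ht.1, ht.2.le⟩]
  have hu0 := tendsto_nhdsGT_zero_of_tendsto_div_self hslope
  have hud : DifferentiableOn ℝ u (Ioo 0 t₁) := (hC2.differentiableOn two_ne_zero).mono hsub
  have hu' : ∀ t ∈ Ioo 0 t₁, 0 < deriv u t := fun t ht =>
    (div_pos (hu t ht) ht.1).trans_le <| hconv.convexOn.div_le_deriv_of_tendsto_nhdsGT_zero hu0 ht
      ((hud t ht).differentiableAt (Ioo_mem_nhds ht.1 ht.2))
  have hlim' := hconv.convexOn.tendsto_deriv_nhdsGT_zero ht₁ hud (fun t ht => (hu t ht).le) hslope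
  obtain ⟨hw, hw'⟩ :=
    contDiffOn_update_Icc_of_tendsto (hC2.of_le one_le_two) ht₁ ht₁t₀ hu0 hlim'
  exact ⟨t₁, ⟨ht₁, ht₁t₀.le⟩, fun t ht => ⟨hu'' t ht, hu' t ht⟩, hlim', hslope, hconv,
    Function.update u 0 0, fun t ht => Function.update_of_ne ht.1.ne' _ _, hw,
    Function.update_self _ _ _, hw'⟩

/-- A positive solution of `−ũ'' + μ̃² t⁻² ũ + m₂² t² ũ = λ t^q ũ`
on `(0,t₀]` decaying like `t^{1+ε₁}` is strictly convex and increasing near the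
origin, with `ũ'(t) → 0` and `ũ(t)/t → 0` as `t → 0⁺`; in particular it extends to a
`C¹` function on `[0,t₁]` with `ũ(0) = 0 = ũ'(0)`. -/
theorem positive_solution_C1_extension
    (μt m₂ lam q t₀ c ε₁ : ℝ) (hμ : 0 < μt) (hm₂ : 0 < m₂) (hlam : 0 < lam)
    (hq₁ : -2 < q) (hq₂ : q < 2) (ht₀ : 0 < t₀) (ht₀' : t₀ < 1)
    (hc : 0 < c) (hε₁ : 0 < ε₁) (u : ℝ → ℝ)
    (hC2 : ContDiffOn ℝ 2 u (Ioo 0 t₀))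
    (hODE : ∀ t ∈ Ioo (0:ℝ) t₀,
      -(deriv (deriv u) t) + μt^2 / t^2 * u t + m₂^2 * t^2 * u t = lam * t ^ q * u t)
    (hpos : ∀ t ∈ Ioc (0:ℝ) t₀, 0 < u t)
    (hbound : ∀ t ∈ Ioc (0:ℝ) t₀, u t ≤ c * t ^ (1 + ε₁)) :
    ∃ t₁ ∈ Ioc (0:ℝ) t₀,
      (∀ t ∈ Ioo (0:ℝ) t₁, 0 < deriv (deriv u) t ∧ 0 < deriv u t) ∧
      Tendsto (deriv u) (𝓝[>] 0) (𝓝 0) ∧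
      Tendsto (fun t => u t / t) (𝓝[>] 0) (𝓝 0) ∧
      StrictConvexOn ℝ (Ioo 0 t₁) u ∧
      ∃ w : ℝ → ℝ, EqOn w u (Ioo 0 t₁) ∧ ContDiffOn ℝ 1 w (Icc 0 t₁) ∧
        w 0 = 0 ∧ derivWithin w (Icc 0 t₁) 0 = 0 :=
  positive_solution_C1_extension_general μt m₂ lam q t₀ c ε₁ hμ hq₁ ht₀ hε₁ u hC2 hODE hpos hbound
end

section
/- Let μ̃ > 0 and m₂ > 0, and equip smooth functions on (0,∞) with the inner product ⟨u,v⟩ = ∫₀^∞ ( u'(t) v'(t) + μ̃² t⁻² u(t) v(t) + m₂² t² u(t) v(t) ) dt. Then there exists a constant C > 0, depending only on μ̃ and m₂, such that for every (finite or countable) family (e_i) of C¹ functions on (0,∞) with finite norm that is orthonormal with respect to ⟨·,·⟩, one has Σ_i |e_i(t)|² ≤ C for every t > 0, and consequently Σ_i ∫₀^∞ (1+t)⁻² |e_i(t)|² dt ≤ C. In other words, the embedding of the energy space into L²((0,∞), (1+t)⁻² dt) is Hilbert–Schmidt. -/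
open MeasureTheory Filter Set Topology

/-!
If `w` has finite energy, then `w²` is integrable on `(t, ∞)` together with its derivative
`2 w w'`, so `w² → 0` at infinity and `w(t)² = -∫ₜ^∞ 2 w w' ≤ ∫₀^∞ (w'² + w²)`. Since
`μ²/t² + m² t² ≥ 2 μ m`, the right-hand side is at most `C = 1 + (2 μ m)⁻¹` times the energy of `w`.
For a finite part of an orthonormal family, the combination `w = Σᵢ eᵢ(t) eᵢ` has energy
`S = Σᵢ eᵢ(t)²`, which is also its value at `t`, so `S² ≤ C S`, i.e. `S ≤ C`. Integrating this
against `(1 + t)⁻² dt`, a probability measure on `(0, ∞)`, gives the Hilbert–Schmidt bound.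
-/

namespace EnergySpace

theorem sq_le_integral_Ioi_deriv_sq_add_sq {w : ℝ → ℝ} {a : ℝ}
    (hw : ∀ x ∈ Ici a, DifferentiableAt ℝ w x)
    (hint : IntegrableOn (fun x => deriv w x ^ 2 + w x ^ 2) (Ioi a)) :
    w a ^ 2 ≤ ∫ x in Ioi a, (deriv w x ^ 2 + w x ^ 2) := by
  have hderiv : ∀ x ∈ Ici a, HasDerivAt (fun x => w x ^ 2) (2 * w x * deriv w x) x := fun x hx => by
    simpa using (hw x hx).hasDerivAt.fun_pow 2
  have hw_meas : AEStronglyMeasurable w (volume.restrict (Ioi a)) :=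
    (ContinuousOn.mono (fun x hx => (hw x hx).continuousAt.continuousWithinAt)
      Ioi_subset_Ici_self).aestronglyMeasurable measurableSet_Ioi
  have hint_sq : IntegrableOn (fun x => w x ^ 2) (Ioi a) :=
    hint.mono' (hw_meas.pow 2) (ae_of_all _ fun x => by
      rw [Real.norm_eq_abs, abs_of_nonneg (sq_nonneg _)]
      linarith [sq_nonneg (deriv w x)])
  have hint_deriv : IntegrableOn (fun x => 2 * w x * deriv w x) (Ioi a) :=
    hint.mono' ((hw_meas.const_mul 2).mul (measurable_deriv w).aestronglyMeasurable)
      (ae_of_all _ fun x => by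
        rw [Real.norm_eq_abs, abs_le]
        constructor <;> nlinarith [sq_nonneg (w x + deriv w x), sq_nonneg (w x - deriv w x)])
  have hlim : Tendsto (fun x => w x ^ 2) atTop (𝓝 0) :=
    tendsto_zero_of_hasDerivAt_of_integrableOn_Ioi (fun x hx => hderiv x (mem_Ici_of_Ioi hx))
      hint_deriv hint_sq
  calc w a ^ 2 = ∫ x in Ioi a, -(2 * w x * deriv w x) := by
        rw [integral_neg, integral_Ioi_of_hasDerivAt_of_tendsto' hderiv hint_deriv hlim]; ring
    _ ≤ ∫ x in Ioi a, (deriv w x ^ 2 + w x ^ 2) :=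
        setIntegral_mono_on hint_deriv.neg hint measurableSet_Ioi fun x _ => by
          nlinarith [sq_nonneg (w x + deriv w x)]

noncomputable def energyDensity (μ m : ℝ) (u v : ℝ → ℝ) (t : ℝ) : ℝ :=
  deriv u t * deriv v t + μ ^ 2 / t ^ 2 * u t * v t + m ^ 2 * t ^ 2 * u t * v t

section EnergyDensity

variable {μ m : ℝ}

theorem energyDensity_self (u : ℝ → ℝ) (t : ℝ) :
    energyDensity μ m u u t =
      deriv u t ^ 2 + μ ^ 2 / t ^ 2 * u t ^ 2 + m ^ 2 * t ^ 2 * u t ^ 2 := by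
  unfold energyDensity; ring

theorem abs_energyDensity_le (u v : ℝ → ℝ) (t : ℝ) :
    |energyDensity μ m u v t| ≤ (energyDensity μ m u u t + energyDensity μ m v v t) / 2 := by
  have hc₁ : 0 ≤ μ ^ 2 / t ^ 2 := by positivity
  have hc₂ : 0 ≤ m ^ 2 * t ^ 2 := by positivity
  rw [abs_le]
  unfold energyDensity
  constructor
  · nlinarith [sq_nonneg (deriv u t + deriv v t), mul_nonneg hc₁ (sq_nonneg (u t + v t)),
      mul_nonneg hc₂ (sq_nonneg (u t + v t))]
  · nlinarith [sq_nonneg (deriv u t - deriv v t), mul_nonneg hc₁ (sq_nonneg (u t - v t)),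
      mul_nonneg hc₂ (sq_nonneg (u t - v t))]

theorem deriv_sq_add_sq_le_energyDensity (hμ : 0 < μ) (hm : 0 < m) {t : ℝ} (ht : 0 < t)
    (u : ℝ → ℝ) :
    deriv u t ^ 2 + u t ^ 2 ≤ (1 + (2 * μ * m)⁻¹) * energyDensity μ m u u t := by
  have hweight : 2 * μ * m ≤ μ ^ 2 / t ^ 2 + m ^ 2 * t ^ 2 := by
    have h : (μ / t - m * t) ^ 2 = μ ^ 2 / t ^ 2 + m ^ 2 * t ^ 2 - 2 * μ * m := by
      field_simp; ring
    linarith [sq_nonneg (μ / t - m * t)]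
  have hsq : u t ^ 2 ≤ (2 * μ * m)⁻¹ * ((μ ^ 2 / t ^ 2 + m ^ 2 * t ^ 2) * u t ^ 2) :=
    (le_inv_mul_iff₀ (by positivity)).2 (mul_le_mul_of_nonneg_right hweight (sq_nonneg _))
  have hK : 0 ≤ (2 * μ * m)⁻¹ := by positivity
  rw [energyDensity_self]
  nlinarith [mul_nonneg hK (sq_nonneg (deriv u t)),
    mul_nonneg (div_nonneg (sq_nonneg μ) (sq_nonneg t)) (sq_nonneg (u t)),
    mul_nonneg (mul_nonneg (sq_nonneg m) (sq_nonneg t)) (sq_nonneg (u t))]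

theorem aestronglyMeasurable_energyDensity {ν : Measure ℝ} {u v : ℝ → ℝ}
    (hu : AEStronglyMeasurable u ν) (hv : AEStronglyMeasurable v ν) :
    AEStronglyMeasurable (energyDensity μ m u v) ν := by
  have hμ : AEStronglyMeasurable (fun t : ℝ => μ ^ 2 / t ^ 2) ν :=
    (by fun_prop : Measurable fun t : ℝ => μ ^ 2 / t ^ 2).aestronglyMeasurable
  have hm : AEStronglyMeasurable (fun t : ℝ => m ^ 2 * t ^ 2) ν := by fun_prop
  exact (((measurable_deriv u).aestronglyMeasurable.mul
    (measurable_deriv v).aestronglyMeasurable).add ((hμ.mul hu).mul hv)).add ((hm.mul hu).mul hv)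

theorem integrable_energyDensity {ν : Measure ℝ} {u v : ℝ → ℝ}
    (hu : AEStronglyMeasurable u ν) (hv : AEStronglyMeasurable v ν)
    (huu : Integrable (energyDensity μ m u u) ν) (hvv : Integrable (energyDensity μ m v v) ν) :
    Integrable (energyDensity μ m u v) ν :=
  ((huu.add hvv).div_const 2).mono' (aestronglyMeasurable_energyDensity hu hv)
    (ae_of_all _ fun t => (Real.norm_eq_abs _).trans_le (abs_energyDensity_le u v t))

theorem energyDensity_sum_sum {ι : Type*} (s : Finset ι) (a : ι → ℝ) (e : ι → ℝ → ℝ) {t : ℝ}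
    (he : ∀ i ∈ s, DifferentiableAt ℝ (e i) t) :
    energyDensity μ m (fun x => ∑ i ∈ s, a i * e i x) (fun x => ∑ i ∈ s, a i * e i x) t =
      ∑ i ∈ s, ∑ j ∈ s, a i * a j * energyDensity μ m (e i) (e j) t := by
  have hderiv : deriv (fun x => ∑ i ∈ s, a i * e i x) t = ∑ i ∈ s, a i * deriv (e i) t := by
    rw [deriv_fun_sum fun i hi => (he i hi).const_mul (a i)]
    exact Finset.sum_congr rfl fun i hi => deriv_const_mul (a i) (he i hi)
  unfold energyDensity
  rw [hderiv]
  simp only [Finset.mul_sum, Finset.sum_mul, ← Finset.sum_add_distrib]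
  exact Finset.sum_congr rfl fun i _ => Finset.sum_congr rfl fun j _ => by ring

theorem sq_le_integral_energyDensity (hμ : 0 < μ) (hm : 0 < m) {w : ℝ → ℝ}
    (hw : DifferentiableOn ℝ w (Ioi 0)) (hint : IntegrableOn (energyDensity μ m w w) (Ioi 0))
    {t : ℝ} (ht : 0 < t) :
    w t ^ 2 ≤ (1 + (2 * μ * m)⁻¹) * ∫ s in Ioi 0, energyDensity μ m w w s := by
  have hle : ∀ s ∈ Ioi (0 : ℝ),
      deriv w s ^ 2 + w s ^ 2 ≤ (1 + (2 * μ * m)⁻¹) * energyDensity μ m w w s :=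
    fun s hs => deriv_sq_add_sq_le_energyDensity hμ hm hs w
  have hint' : IntegrableOn (fun s => deriv w s ^ 2 + w s ^ 2) (Ioi 0) :=
    (hint.const_mul _).mono'
      (((measurable_deriv w).aestronglyMeasurable.pow 2).add
        ((hw.continuousOn.aestronglyMeasurable measurableSet_Ioi).pow 2))
      ((ae_restrict_mem measurableSet_Ioi).mono fun s hs => by
        rw [Real.norm_eq_abs, abs_of_nonneg (by positivity)]
        exact hle s hs)
  calc w t ^ 2 ≤ ∫ s in Ioi t, (deriv w s ^ 2 + w s ^ 2) :=
        sq_le_integral_Ioi_deriv_sq_add_sq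
          (fun s hs => hw.differentiableAt (isOpen_Ioi.mem_nhds (ht.trans_le hs)))
          (hint'.mono_set (Ioi_subset_Ioi ht.le))
    _ ≤ ∫ s in Ioi 0, (deriv w s ^ 2 + w s ^ 2) :=
        setIntegral_mono_set hint' (ae_of_all _ fun s => by positivity)
          (Ioi_subset_Ioi ht.le).eventuallyLE
    _ ≤ ∫ s in Ioi 0, (1 + (2 * μ * m)⁻¹) * energyDensity μ m w w s :=
        setIntegral_mono_on hint' (hint.const_mul _) measurableSet_Ioi hle
    _ = (1 + (2 * μ * m)⁻¹) * ∫ s in Ioi 0, energyDensity μ m w w s := integral_const_mul _ _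

end EnergyDensity

section Orthonormal

variable {ι : Type*} [DecidableEq ι] {μ m : ℝ} {e : ι → ℝ → ℝ}

theorem energyDensity_sum_of_orthonormal (hd : ∀ i, DifferentiableOn ℝ (e i) (Ioi 0))
    (hint : ∀ i, IntegrableOn (energyDensity μ m (e i) (e i)) (Ioi 0))
    (horth : ∀ i j, ∫ t in Ioi 0, energyDensity μ m (e i) (e j) t = if i = j then 1 else 0)
    (s : Finset ι) (a : ι → ℝ) :
    IntegrableOn (energyDensity μ m (fun x => ∑ i ∈ s, a i * e i x)
        (fun x => ∑ i ∈ s, a i * e i x)) (Ioi 0) ∧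
      ∫ t in Ioi 0, energyDensity μ m (fun x => ∑ i ∈ s, a i * e i x)
        (fun x => ∑ i ∈ s, a i * e i x) t = ∑ i ∈ s, a i ^ 2 := by
  have hpair : ∀ i j, IntegrableOn (energyDensity μ m (e i) (e j)) (Ioi 0) := fun i j =>
    integrable_energyDensity ((hd i).continuousOn.aestronglyMeasurable measurableSet_Ioi)
      ((hd j).continuousOn.aestronglyMeasurable measurableSet_Ioi) (hint i) (hint j)
  have hexpand : EqOn (energyDensity μ m (fun x => ∑ i ∈ s, a i * e i x)
      (fun x => ∑ i ∈ s, a i * e i x))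
      (fun t => ∑ i ∈ s, ∑ j ∈ s, a i * a j * energyDensity μ m (e i) (e j) t) (Ioi 0) :=
    fun t ht => energyDensity_sum_sum s a e fun i _ =>
      (hd i).differentiableAt (isOpen_Ioi.mem_nhds ht)
  have hint_inner : ∀ i, IntegrableOn
      (fun t => ∑ j ∈ s, a i * a j * energyDensity μ m (e i) (e j) t) (Ioi 0) := fun i =>
    integrable_finsetSum _ fun j _ => (hpair i j).const_mul _
  refine ⟨IntegrableOn.congr_fun (integrable_finsetSum _ fun i _ => hint_inner i) hexpand.symm
    measurableSet_Ioi, ?_⟩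
  rw [setIntegral_congr_fun measurableSet_Ioi hexpand,
    integral_finsetSum _ fun i _ => hint_inner i]
  refine Finset.sum_congr rfl fun i hi => ?_
  rw [integral_finsetSum _ fun j _ => (hpair i j).const_mul _]
  simp only [integral_const_mul, horth, mul_ite, mul_one, mul_zero, Finset.sum_ite_eq, if_pos hi,
    sq]

theorem sum_sq_le_of_orthonormal (hμ : 0 < μ) (hm : 0 < m)
    (hd : ∀ i, DifferentiableOn ℝ (e i) (Ioi 0))
    (hint : ∀ i, IntegrableOn (energyDensity μ m (e i) (e i)) (Ioi 0))
    (horth : ∀ i j, ∫ t in Ioi 0, energyDensity μ m (e i) (e j) t = if i = j then 1 else 0)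
    {t : ℝ} (ht : 0 < t) (s : Finset ι) :
    ∑ i ∈ s, e i t ^ 2 ≤ 1 + (2 * μ * m)⁻¹ := by
  obtain ⟨hint_w, henergy⟩ := energyDensity_sum_of_orthonormal hd hint horth s (fun i => e i t)
  have hw : DifferentiableOn ℝ (fun x => ∑ i ∈ s, e i t * e i x) (Ioi 0) :=
    DifferentiableOn.fun_sum fun i _ => (hd i).const_mul _
  have h := sq_le_integral_energyDensity hμ hm hw hint_w ht
  simp only [henergy, ← sq] at h
  have hS : 0 ≤ ∑ i ∈ s, e i t ^ 2 := Finset.sum_nonneg fun i _ => sq_nonneg _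
  have hC : 0 < 1 + (2 * μ * m)⁻¹ := by positivity
  nlinarith

end Orthonormal

theorem hasDerivAt_neg_inv_one_add {x : ℝ} (hx : 1 + x ≠ 0) :
    HasDerivAt (fun t : ℝ => -(1 + t)⁻¹) ((1 + x) ^ 2)⁻¹ x := by
  have h := (((hasDerivAt_id x).const_add 1).inv hx).neg
  exact h.congr_deriv (by simp only [id, neg_div, neg_neg, one_div])

theorem tendsto_neg_inv_one_add_atTop : Tendsto (fun t : ℝ => -(1 + t)⁻¹) atTop (𝓝 0) := by
  simpa using
    (tendsto_inv_atTop_zero.comp (tendsto_atTop_add_const_left atTop (1 : ℝ) tendsto_id)).neg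

theorem integrableOn_Ioi_inv_sq_one_add : IntegrableOn (fun t : ℝ => ((1 + t) ^ 2)⁻¹) (Ioi 0) :=
  integrableOn_Ioi_deriv_of_nonneg'
    (fun _ hx => hasDerivAt_neg_inv_one_add (add_pos_of_pos_of_nonneg one_pos hx).ne')
    (fun _ _ => by positivity) tendsto_neg_inv_one_add_atTop

theorem integral_Ioi_inv_sq_one_add : ∫ t in Ioi (0 : ℝ), ((1 + t) ^ 2)⁻¹ = 1 := by
  rw [integral_Ioi_of_hasDerivAt_of_nonneg'
    (fun _ hx => hasDerivAt_neg_inv_one_add (add_pos_of_pos_of_nonneg one_pos hx).ne')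
    (fun _ _ => by positivity) tendsto_neg_inv_one_add_atTop]
  norm_num

theorem sum_integral_mul_le_of_sum_le {ι α : Type*} [MeasurableSpace α] {ν : Measure α}
    {g : α → ℝ} {f : ι → α → ℝ} {c : ℝ} (hg : Integrable g ν) (hg₀ : 0 ≤ g)
    (hf : ∀ i, AEStronglyMeasurable (f i) ν) (hf₀ : ∀ i x, 0 ≤ f i x)
    (hfc : ∀ᵐ x ∂ν, ∀ s : Finset ι, ∑ i ∈ s, f i x ≤ c) (s : Finset ι) :
    ∑ i ∈ s, ∫ x, g x * f i x ∂ν ≤ c * ∫ x, g x ∂ν := by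
  have hint : ∀ i, Integrable (fun x => g x * f i x) ν := fun i =>
    (hg.mul_const c).mono' ((hg.aestronglyMeasurable).mul (hf i)) (hfc.mono fun x hx => by
      rw [Real.norm_eq_abs, abs_of_nonneg (mul_nonneg (hg₀ x) (hf₀ i x))]
      exact mul_le_mul_of_nonneg_left (by simpa using hx {i}) (hg₀ x))
  rw [← integral_finsetSum s fun i _ => hint i, ← integral_const_mul]
  refine integral_mono_ae (integrable_finsetSum s fun i _ => hint i) (hg.const_mul c)
    (hfc.mono fun x hx => ?_)
  change ∑ i ∈ s, g x * f i x ≤ c * g x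
  rw [← Finset.mul_sum, mul_comm c]
  exact mul_le_mul_of_nonneg_left (hx s) (hg₀ x)

end EnergySpace

open EnergySpace

/-- For any countable family orthonormal with respect to the
energy inner product `⟨u,v⟩ = ∫₀^∞ (u'v' + μ̃² t⁻² uv + m₂² t² uv) dt`, the sums
`Σᵢ |eᵢ(t)|²` are uniformly bounded and `Σᵢ ∫₀^∞ (1+t)⁻² |eᵢ|² ≤ C`, i.e. the
embedding of the energy space into `L²((0,∞),(1+t)⁻² dt)` is Hilbert–Schmidt. -/
theorem energy_space_embedding_hilbert_schmidt
    (μt m₂ : ℝ) (hμ : 0 < μt) (hm₂ : 0 < m₂) :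
    ∃ C > (0:ℝ), ∀ (ι : Type) [Countable ι] [DecidableEq ι] (e : ι → ℝ → ℝ),
      (∀ i, ContDiffOn ℝ 1 (e i) (Ioi 0)) →
      (∀ i, IntegrableOn (fun t =>
        (deriv (e i) t)^2 + μt^2 / t^2 * (e i t)^2 + m₂^2 * t^2 * (e i t)^2) (Ioi 0)) →
      (∀ i j, (∫ t in Ioi (0:ℝ),
          (deriv (e i) t * deriv (e j) t + μt^2 / t^2 * (e i t) * (e j t)
            + m₂^2 * t^2 * (e i t) * (e j t)))
        = if i = j then 1 else 0) →
      (∀ t > (0:ℝ), Summable (fun i => (e i t)^2) ∧ ∑' i, (e i t)^2 ≤ C) ∧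
      Summable (fun i => ∫ t in Ioi (0:ℝ), ((1 + t)^2)⁻¹ * (e i t)^2) ∧
      ∑' i, ∫ t in Ioi (0:ℝ), ((1 + t)^2)⁻¹ * (e i t)^2 ≤ C := by
  refine ⟨1 + (2 * μt * m₂)⁻¹, by positivity, fun ι _ _ e he hint horth => ?_⟩
  have hd : ∀ i, DifferentiableOn ℝ (e i) (Ioi 0) := fun i => (he i).differentiableOn one_ne_zero
  have hint' : ∀ i, IntegrableOn (energyDensity μt m₂ (e i) (e i)) (Ioi 0) := fun i => by
    simpa only [← energyDensity_self] using hint i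
  have hbessel : ∀ t > (0 : ℝ), ∀ s : Finset ι, ∑ i ∈ s, e i t ^ 2 ≤ 1 + (2 * μt * m₂)⁻¹ :=
    fun t ht => sum_sq_le_of_orthonormal hμ hm₂ hd hint' horth ht
  have hHS : ∀ s : Finset ι, ∑ i ∈ s, ∫ t in Ioi (0 : ℝ), ((1 + t) ^ 2)⁻¹ * e i t ^ 2 ≤
      1 + (2 * μt * m₂)⁻¹ := fun s => by
    simpa only [integral_Ioi_inv_sq_one_add, mul_one, Pi.pow_apply] using
      sum_integral_mul_le_of_sum_le integrableOn_Ioi_inv_sq_one_add (fun t => by positivity)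
      (fun i => ((hd i).continuousOn.aestronglyMeasurable measurableSet_Ioi).pow 2)
      (fun i t => sq_nonneg (e i t))
      ((ae_restrict_mem measurableSet_Ioi).mono fun t ht => hbessel t ht) s
  have hHS₀ : ∀ i, 0 ≤ ∫ t in Ioi (0 : ℝ), ((1 + t) ^ 2)⁻¹ * e i t ^ 2 := fun i =>
    integral_nonneg fun t => by positivity
  exact ⟨fun t ht => ⟨summable_of_sum_le (fun i => sq_nonneg _) (hbessel t ht),
      Real.tsum_le_of_sum_le (fun i => sq_nonneg _) (hbessel t ht)⟩,
    summable_of_sum_le hHS₀ hHS, Real.tsum_le_of_sum_le hHS₀ hHS⟩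
end

section
/- Let μ̃ > 0, m₂ > 0 and let q be a real exponent with −2 < q < 2. Then there exist constants c > 0 and γ > 0, depending only on μ̃, m₂ and q, with the following property: for every λ > 0 and every C¹ function u on (0,∞) with finite energy norm ‖u‖² = ∫₀^∞ ( |u'(t)|² + μ̃² t⁻²|u(t)|² + m₂² t²|u(t)|² ) dt satisfying the eigen-relation ‖u‖² ≤ c₁ λ ∫₀^∞ t^q |u(t)|² dt for a fixed constant c₁ > 0, one has ‖u‖² ≤ c (1+λ)^{2γ} ∫₀^∞ (1+t)⁻² |u(t)|² dt (with c also depending on c₁). -/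
open MeasureTheory Set

/-! For `|q| < 2` and `P ≥ 1`, a three-region comparison (with `R = P ^ (2 - |q|)⁻¹`: against
`t⁻²` for `t ≤ R⁻¹`, against `t²` for `t ≥ R`, and `t ^ q ≤ R ^ |q|` in between) gives
`t ^ q ≤ P⁻¹ (t⁻² + t²) + 4 P ^ K (1 + t)⁻²` with `K = (|q| + 2) / (2 - |q|)`. Multiplied by `u²`
and integrated, this bounds `∫ t ^ q u²` by `P⁻¹ (μ̃⁻² + m₂⁻²) ‖u‖² + 4 P ^ K ∫ (1 + t)⁻² u²`.
Taking `P = (1 + 2 c₁ (μ̃⁻² + m₂⁻²)) (1 + λ)` the first term is at most `‖u‖² / (2 c₁ λ)` and is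
absorbed by the eigen-relation, which leaves `‖u‖² ≤ 8 c₁ λ P ^ K ∫ (1 + t)⁻² u²`, so
`γ = (K + 1) / 2` works. -/

theorem rpow_le_rpow_abs_of_inv_le_of_le {q R t : ℝ} (ht : 0 < t) (hRt : R⁻¹ ≤ t)
    (htR : t ≤ R) : t ^ q ≤ R ^ |q| := by
  rcases le_or_gt 0 q with hq | hq
  · rw [abs_of_nonneg hq]
    exact Real.rpow_le_rpow ht.le htR hq
  · rw [abs_of_neg hq, ← inv_inv t, Real.inv_rpow (inv_nonneg.2 ht.le),
      ← Real.rpow_neg (inv_nonneg.2 ht.le)]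
    exact Real.rpow_le_rpow (by positivity) (inv_le_of_inv_le₀ (ht.trans_le htR) hRt)
      (by linarith)

theorem rpow_le_inv_sq_add_sq_add_inv_one_add_sq {q R t : ℝ} (hq : |q| ≤ 2) (hR : 1 ≤ R)
    (ht : 0 < t) :
    t ^ q ≤ (R ^ (2 - |q|))⁻¹ * ((t ^ 2)⁻¹ + t ^ 2) + 4 * R ^ (|q| + 2) * ((1 + t) ^ 2)⁻¹ := by
  obtain ⟨hq₁, hq₂⟩ := abs_le.1 hq
  have hR₀ : 0 < R := by linarith
  have hRinv : 0 ≤ (R ^ (2 - |q|))⁻¹ := by positivity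
  have hweight : 0 ≤ 4 * R ^ (|q| + 2) * ((1 + t) ^ 2)⁻¹ := by positivity
  have hsq : t ^ (2 : ℝ) = t ^ 2 := Real.rpow_two t
  rcases le_or_gt t R⁻¹ with hsmall | hmid
  · have hprod : t ^ q * t ^ 2 ≤ (R ^ (2 - |q|))⁻¹ := calc
      t ^ q * t ^ 2 = t ^ (q + 2) := by rw [← hsq, Real.rpow_add ht]
      _ ≤ R⁻¹ ^ (q + 2) := Real.rpow_le_rpow ht.le hsmall (by linarith)
      _ = (R ^ (q + 2))⁻¹ := Real.inv_rpow hR₀.le _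
      _ ≤ (R ^ (2 - |q|))⁻¹ := by
        gcongr
        linarith [neg_abs_le q]
    have hbound : t ^ q ≤ (R ^ (2 - |q|))⁻¹ * (t ^ 2)⁻¹ := by
      rwa [← div_eq_mul_inv, le_div_iff₀ (by positivity)]
    nlinarith [mul_nonneg hRinv (sq_nonneg t)]
  rcases le_or_gt R t with hlarge | hmid'
  · have hbound : t ^ q ≤ (R ^ (2 - |q|))⁻¹ * t ^ 2 := calc
      t ^ q = t ^ (q - 2) * t ^ 2 := by rw [← hsq, ← Real.rpow_add ht]; ring_nf
      _ ≤ R ^ (q - 2) * t ^ 2 := by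
        gcongr ?_ * _
        exact Real.rpow_le_rpow_of_nonpos hR₀ hlarge (by linarith)
      _ = (R ^ (2 - q))⁻¹ * t ^ 2 := by rw [← Real.rpow_neg hR₀.le, neg_sub]
      _ ≤ (R ^ (2 - |q|))⁻¹ * t ^ 2 := by
        gcongr
        exact le_abs_self q
    nlinarith [mul_nonneg hRinv (inv_nonneg.2 (sq_nonneg t))]
  · have hone : (1 + t) ^ 2 ≤ 4 * R ^ (2 : ℝ) := by
      rw [Real.rpow_two]; nlinarith
    have hbound : t ^ q ≤ 4 * R ^ (|q| + 2) * ((1 + t) ^ 2)⁻¹ := calc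
      t ^ q ≤ R ^ |q| := rpow_le_rpow_abs_of_inv_le_of_le ht hmid.le hmid'.le
      _ = 4 * R ^ (|q| + 2) * (4 * R ^ (2 : ℝ))⁻¹ := by
        rw [Real.rpow_add hR₀]; field_simp
      _ ≤ 4 * R ^ (|q| + 2) * ((1 + t) ^ 2)⁻¹ := by gcongr
    nlinarith [mul_nonneg hRinv (add_nonneg (inv_nonneg.2 (sq_nonneg t)) (sq_nonneg t))]

-- `g` plays the role of `(u')²` and `f` that of `u²`.
noncomputable def energyDensity (μ m : ℝ) (g f : ℝ → ℝ) (t : ℝ) : ℝ :=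
  g t + μ ^ 2 / t ^ 2 * f t + m ^ 2 * t ^ 2 * f t

theorem inv_sq_add_sq_mul_le_energyDensity {μ m : ℝ} {g f : ℝ → ℝ} (hμ : μ ≠ 0) (hm : m ≠ 0)
    (hg₀ : ∀ t, 0 ≤ g t) (hf₀ : ∀ t, 0 ≤ f t) (t : ℝ) :
    ((t ^ 2)⁻¹ + t ^ 2) * f t ≤ ((μ ^ 2)⁻¹ + (m ^ 2)⁻¹) * energyDensity μ m g f t := by
  have hsplit : ((t ^ 2)⁻¹ + t ^ 2) * f t
      = (μ ^ 2)⁻¹ * (μ ^ 2 / t ^ 2 * f t) + (m ^ 2)⁻¹ * (m ^ 2 * t ^ 2 * f t) := by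
    field_simp
  have := hg₀ t
  have : 0 ≤ μ ^ 2 / t ^ 2 * f t := by have := hf₀ t; positivity
  have : 0 ≤ m ^ 2 * t ^ 2 * f t := by have := hf₀ t; positivity
  rw [hsplit, energyDensity]
  nlinarith [inv_nonneg.2 (sq_nonneg μ), inv_nonneg.2 (sq_nonneg m)]

theorem setIntegral_rpow_mul_le_s18 {q R : ℝ} {f : ℝ → ℝ} (hq : |q| ≤ 2) (hR : 1 ≤ R)
    (hf₀ : ∀ t, 0 ≤ f t) (hf : AEStronglyMeasurable f (volume.restrict (Ioi 0)))
    (hV : IntegrableOn (fun t => ((t ^ 2)⁻¹ + t ^ 2) * f t) (Ioi 0)) :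
    ∫ t in Ioi 0, t ^ q * f t ≤ (R ^ (2 - |q|))⁻¹ * (∫ t in Ioi 0, ((t ^ 2)⁻¹ + t ^ 2) * f t)
      + 4 * R ^ (|q| + 2) * ∫ t in Ioi 0, ((1 + t) ^ 2)⁻¹ * f t := by
  have hW : IntegrableOn (fun t => ((1 + t) ^ 2)⁻¹ * f t) (Ioi 0) := by
    refine hV.mono'
      ((by fun_prop : Measurable fun t : ℝ => ((1 + t) ^ 2)⁻¹).aestronglyMeasurable.mul hf)
      (ae_restrict_of_forall_mem measurableSet_Ioi fun t (ht : 0 < t) => ?_)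
    rw [Real.norm_of_nonneg (by have := hf₀ t; positivity)]
    gcongr
    · exact hf₀ t
    · calc ((1 + t) ^ 2)⁻¹ ≤ (t ^ 2)⁻¹ := by gcongr; linarith
        _ ≤ (t ^ 2)⁻¹ + t ^ 2 := by nlinarith
  rw [← integral_const_mul, ← integral_const_mul,
    ← integral_add (hV.const_mul _) (hW.const_mul _)]
  refine integral_mono_of_nonneg
    (ae_restrict_of_forall_mem measurableSet_Ioi fun t (ht : 0 < t) => ?_)
    ((hV.const_mul _).add (hW.const_mul _))
    (ae_restrict_of_forall_mem measurableSet_Ioi fun t (ht : 0 < t) => ?_)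
  · have := hf₀ t
    positivity
  · have := mul_le_mul_of_nonneg_right (rpow_le_inv_sq_add_sq_add_inv_one_add_sq hq hR ht) (hf₀ t)
    linarith

theorem setIntegral_rpow_mul_le_energy {μ m q P : ℝ} {g f : ℝ → ℝ} (hμ : μ ≠ 0) (hm : m ≠ 0)
    (hq : |q| < 2) (hP : 1 ≤ P) (hg₀ : ∀ t, 0 ≤ g t) (hf₀ : ∀ t, 0 ≤ f t)
    (hf : AEStronglyMeasurable f (volume.restrict (Ioi 0)))
    (hF : IntegrableOn (energyDensity μ m g f) (Ioi 0)) :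
    ∫ t in Ioi 0, t ^ q * f t ≤
      P⁻¹ * ((μ ^ 2)⁻¹ + (m ^ 2)⁻¹) * (∫ t in Ioi 0, energyDensity μ m g f t)
        + 4 * P ^ ((|q| + 2) / (2 - |q|)) * ∫ t in Ioi 0, ((1 + t) ^ 2)⁻¹ * f t := by
  have hV : IntegrableOn (fun t => ((t ^ 2)⁻¹ + t ^ 2) * f t) (Ioi 0) := by
    refine (hF.const_mul ((μ ^ 2)⁻¹ + (m ^ 2)⁻¹)).mono'
      ((by fun_prop : Measurable fun t : ℝ => (t ^ 2)⁻¹ + t ^ 2).aestronglyMeasurable.mul hf)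
      (ae_of_all _ fun t => ?_)
    rw [Real.norm_of_nonneg (by have := hf₀ t; positivity)]
    exact inv_sq_add_sq_mul_le_energyDensity hμ hm hg₀ hf₀ t
  have hVE : ∫ t in Ioi 0, ((t ^ 2)⁻¹ + t ^ 2) * f t ≤
      ((μ ^ 2)⁻¹ + (m ^ 2)⁻¹) * ∫ t in Ioi 0, energyDensity μ m g f t := by
    rw [← integral_const_mul]
    exact setIntegral_mono_on hV (hF.const_mul _) measurableSet_Ioi
      fun t _ => inv_sq_add_sq_mul_le_energyDensity hμ hm hg₀ hf₀ t
  have hq' : 0 < 2 - |q| := by linarith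
  set R := P ^ (2 - |q|)⁻¹
  have hR : 1 ≤ R := Real.one_le_rpow hP (inv_nonneg.2 hq'.le)
  have hRP : R ^ (2 - |q|) = P := Real.rpow_inv_rpow (by linarith) hq'.ne'
  have hRK : R ^ (|q| + 2) = P ^ ((|q| + 2) / (2 - |q|)) := by
    rw [← Real.rpow_mul (by linarith), inv_mul_eq_div]
  calc ∫ t in Ioi 0, t ^ q * f t
      ≤ (R ^ (2 - |q|))⁻¹ * (∫ t in Ioi 0, ((t ^ 2)⁻¹ + t ^ 2) * f t)
        + 4 * R ^ (|q| + 2) * ∫ t in Ioi 0, ((1 + t) ^ 2)⁻¹ * f t :=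
        setIntegral_rpow_mul_le_s18 hq.le hR hf₀ hf hV
    _ ≤ _ := by
      rw [hRP, hRK, mul_assoc P⁻¹]
      gcongr

/-- Eigenfunction estimate: there are `γ = γ(μ̃,m₂,q) > 0` and,
for each `c₁ > 0`, a constant `c > 0` such that any finite-energy `C¹` function `u`
with `‖u‖² ≤ c₁ λ ∫₀^∞ t^q |u|²` satisfies
`‖u‖² ≤ c (1+λ)^{2γ} ∫₀^∞ (1+t)⁻² |u|²`. -/
theorem eigenfunction_weighted_estimate
    (μt m₂ q : ℝ) (hμ : 0 < μt) (hm₂ : 0 < m₂) (hq₁ : -2 < q) (hq₂ : q < 2) :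
    ∃ γ > (0:ℝ), ∀ c₁ > (0:ℝ), ∃ c > (0:ℝ), ∀ lam > (0:ℝ), ∀ u : ℝ → ℝ,
      ContDiffOn ℝ 1 u (Ioi 0) →
      IntegrableOn (fun t =>
        (deriv u t)^2 + μt^2 / t^2 * (u t)^2 + m₂^2 * t^2 * (u t)^2) (Ioi 0) →
      (∫ t in Ioi (0:ℝ),
          ((deriv u t)^2 + μt^2 / t^2 * (u t)^2 + m₂^2 * t^2 * (u t)^2))
        ≤ c₁ * lam * ∫ t in Ioi (0:ℝ), t ^ q * (u t)^2 →
      (∫ t in Ioi (0:ℝ),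
          ((deriv u t)^2 + μt^2 / t^2 * (u t)^2 + m₂^2 * t^2 * (u t)^2))
        ≤ c * (1 + lam) ^ (2 * γ) * ∫ t in Ioi (0:ℝ), ((1 + t)^2)⁻¹ * (u t)^2 := by
  have hq : |q| < 2 := abs_lt.2 ⟨hq₁, hq₂⟩
  set K := (|q| + 2) / (2 - |q|)
  have hK : 0 ≤ K := div_nonneg (by positivity) (by linarith)
  set M := (μt ^ 2)⁻¹ + (m₂ ^ 2)⁻¹
  refine ⟨(K + 1) / 2, by positivity, fun c₁ hc₁ => ⟨8 * c₁ * (1 + 2 * c₁ * M) ^ K, by positivity,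
    fun lam hlam u hu hF hEig => ?_⟩⟩
  set P := (1 + 2 * c₁ * M) * (1 + lam)
  have hP : 1 ≤ P :=
    one_le_mul_of_one_le_of_one_le (le_add_of_nonneg_right (by positivity)) (by linarith)
  set E := ∫ t in Ioi (0:ℝ), ((deriv u t)^2 + μt^2 / t^2 * (u t)^2 + m₂^2 * t^2 * (u t)^2)
  set W := ∫ t in Ioi (0:ℝ), ((1 + t)^2)⁻¹ * (u t)^2
  have hweighted : ∫ t in Ioi 0, t ^ q * u t ^ 2 ≤ P⁻¹ * M * E + 4 * P ^ K * W :=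
    setIntegral_rpow_mul_le_energy hμ.ne' hm₂.ne' hq hP (fun t => sq_nonneg _)
      (fun t => sq_nonneg _) ((hu.continuousOn.aestronglyMeasurable measurableSet_Ioi).pow 2) hF
  have hE : 0 ≤ E := setIntegral_nonneg measurableSet_Ioi fun t _ => by positivity
  have hsmall : c₁ * lam * (P⁻¹ * M) ≤ 1 / 2 := by
    rw [show c₁ * lam * (P⁻¹ * M) = c₁ * lam * M / P by ring, div_le_iff₀ (by positivity)]
    nlinarith
  have hEW : E ≤ 8 * c₁ * lam * P ^ K * W := by
    linarith [mul_le_mul_of_nonneg_left hweighted (by positivity : 0 ≤ c₁ * lam),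
      mul_le_mul_of_nonneg_right hsmall hE]
  calc E ≤ 8 * c₁ * lam * P ^ K * W := hEW
    _ ≤ 8 * c₁ * (1 + 2 * c₁ * M) ^ K * (1 + lam) ^ (2 * ((K + 1) / 2)) * W := by
      rw [Real.mul_rpow (by positivity) (by positivity), show 2 * ((K + 1) / 2) = K + 1 by ring,
        Real.rpow_add_one (by positivity)]
      linarith [show 0 ≤ 8 * c₁ * (1 + 2 * c₁ * M) ^ K * (1 + lam) ^ K * W by positivity]
end
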